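/- arXiv:2107.11459 — 8 statements merged into one kernel-verified Lean document; each statement's English description precedes it below -/
import Mathlib

section
/- Let (Ω, ℱ, P) be a probability space, W : Ω → 𝒲 measurable with 𝒲 countable, A, Ã : Ω → ℝ measurable, U : Ω → 𝒰 measurable into a measurable space, f : ℝ × 𝒲 × 𝒰 → [0,1] measurable, Y := f(A, W, U), and v ∈ ℝ. Assume for every w ∈ 𝒲 with P(W = w) > 0: (i) P({A ≥ v} ∩ {W = w}) > 0; (ii) A and U are independent under the conditional measure P(· ∣ W = w); (iii) Ã and U are independent under P(· ∣ W = w); (iv) the law of Ã under P(· ∣ W = w) equals the law of A under P(· ∣ {A ≥ v} ∩ {W = w}). Then the expected counterfactual outcome under the threshold intervention equals the covariate-adjusted threshold-response: E[f(Ã, W, U)] = Σ_{w : P(W=w)>0} P(W = w)·E[Y ∣ {A ≥ v} ∩ {W = w}]. -/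
/-!
On each stratum `W = w` the covariate is constant, so `f (Ã, W, U)` and `Y` are functions of
`(Ã, U)` and `(A, U)` alone. Independence makes the law of `(Ã, U)` the product of the laws of
`Ã` and `U`. Conditioning on `A ≥ v`, an event in `σ(A)`, keeps `A` independent of `U` and leaves
the law of `U` unchanged, so the law of `(A, U)` given `A ≥ v` is the product of the same two
laws. Hence the stratum-wise expectations agree, and the law of total expectation over the
countable partition by `W` sums them up.
-/

open MeasureTheory ProbabilityTheory

namespace ProbabilityTheory

variable {Ω α β γ : Type*} [MeasurableSpace Ω] [MeasurableSpace α] [MeasurableSpace β]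
  [MeasurableSpace γ] {ν : Measure Ω}

lemma IndepFun.map_prodMk_cond_preimage [IsFiniteMeasure ν] {A : Ω → β} {U : Ω → γ}
    (hA : Measurable A) (hU : Measurable U) (hAU : IndepFun A U ν) {T : Set β}
    (hT : MeasurableSet T) :
    (ν[|A ⁻¹' T]).map (fun ω => (A ω, U ω)) = ((ν[|A ⁻¹' T]).map A).prod (ν.map U) := by
  refine (Measure.prod_eq fun s t hs ht => ?_).symm
  rw [Measure.map_apply (hA.prodMk hU) (hs.prod ht), Measure.map_apply hA hs,
    Measure.map_apply hU ht, Set.mk_preimage_prod, cond_apply (hA hT), cond_apply (hA hT),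
    ← Set.inter_assoc, ← Set.preimage_inter,
    hAU.measure_inter_preimage_eq_mul _ _ (hT.inter hs) ht, mul_assoc]

lemma map_prodMk_eq_map_prodMk_cond [IsFiniteMeasure ν] {A B : Ω → β} {U : Ω → γ}
    (hA : Measurable A) (hB : Measurable B) (hU : Measurable U)
    (hAU : IndepFun A U ν) (hBU : IndepFun B U ν) {T : Set β} (hT : MeasurableSet T)
    (hlaw : ν.map B = (ν[|A ⁻¹' T]).map A) :
    ν.map (fun ω => (B ω, U ω)) = (ν[|A ⁻¹' T]).map (fun ω => (A ω, U ω)) := by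
  rw [(indepFun_iff_map_prod_eq_prod_map_map hB.aemeasurable hU.aemeasurable).mp hBU, hlaw,
    hAU.map_prodMk_cond_preimage hA hU hT]

lemma integral_comp_prodMk_eq_integral_cond {E : Type*} [NormedAddCommGroup E]
    [NormedSpace ℝ E] [IsFiniteMeasure ν] {A B : Ω → β} {U : Ω → γ}
    (hA : Measurable A) (hB : Measurable B) (hU : Measurable U)
    (hAU : IndepFun A U ν) (hBU : IndepFun B U ν) {T : Set β} (hT : MeasurableSet T)
    (hlaw : ν.map B = (ν[|A ⁻¹' T]).map A) {F : β × γ → E} (hF : StronglyMeasurable F) :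
    ∫ ω, F (B ω, U ω) ∂ν = ∫ ω, F (A ω, U ω) ∂(ν[|A ⁻¹' T]) := by
  rw [← integral_map (hB.prodMk hU).aemeasurable hF.aestronglyMeasurable,
    ← integral_map (hA.prodMk hU).aemeasurable hF.aestronglyMeasurable,
    map_prodMk_eq_map_prodMk_cond hA hB hU hAU hBU hT hlaw]

lemma measureReal_mul_integral_cond {s : Set Ω} (hνs : ν s ≠ ⊤) (g : Ω → ℝ) :
    ν.real s * ∫ ω, g ω ∂(ν[|s]) = ∫ ω in s, g ω ∂ν := by
  by_cases h0 : ν s = 0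
  · simp [Measure.real, h0, Measure.restrict_eq_zero.mpr h0]
  · have hreal : ν.real s ≠ 0 := ENNReal.toReal_ne_zero.mpr ⟨h0, hνs⟩
    rw [cond, integral_smul_measure, ENNReal.toReal_inv, smul_eq_mul, ← mul_assoc,
      ← Measure.real, mul_inv_cancel₀ hreal, one_mul]

lemma integral_eq_tsum_measureReal_mul_integral_cond [IsFiniteMeasure ν] [Countable α]
    [MeasurableSingletonClass α] {X : Ω → α} (hX : Measurable X) {g : Ω → ℝ}
    (hg : Integrable g ν) :
    ∫ ω, g ω ∂ν = ∑' x : {x : α // 0 < ν (X ⁻¹' {x})},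
      ν.real (X ⁻¹' {(x : α)}) * ∫ ω, g ω ∂(ν[|X ⁻¹' {(x : α)}]) := by
  have hfib : ∀ x, MeasurableSet (X ⁻¹' {x}) := fun x => hX (measurableSet_singleton x)
  have hcover : ⋃ x, X ⁻¹' {x} = Set.univ := by
    ext ω; simp
  have hdisj : Pairwise (Function.onFun Disjoint fun x => X ⁻¹' {x}) :=
    fun x y hxy => Set.disjoint_left.mpr fun ω hx hy => hxy (hx.symm.trans hy)
  have hsupp : Function.support (fun x => ∫ ω in X ⁻¹' {x}, g ω ∂ν) ⊆
      {x | 0 < ν (X ⁻¹' {x})} := by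
    intro x hx
    by_contra hnull
    simp_all [Measure.restrict_eq_zero.mpr (nonpos_iff_eq_zero.mp (not_lt.mp hnull))]
  calc ∫ ω, g ω ∂ν = ∑' x, ∫ ω in X ⁻¹' {x}, g ω ∂ν := by
        rw [← integral_iUnion hfib hdisj (hcover ▸ hg.integrableOn), hcover,
          Measure.restrict_univ]
    _ = ∑' x : {x : α // 0 < ν (X ⁻¹' {x})}, ∫ ω in X ⁻¹' {(x : α)}, g ω ∂ν :=
        (tsum_subtype_eq_of_support_subset hsupp).symm
    _ = _ := tsum_congr fun x =>
        (measureReal_mul_integral_cond (measure_ne_top _ _) g).symm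

end ProbabilityTheory

/-- with a countable covariate `W`, an intervened biomarker `Ã` that is
conditionally independent of `U` given `W = w` and whose conditional law given `W = w`
equals the law of `A` given `A ≥ v, W = w`, the expected counterfactual outcome
`E[f(Ã, W, U)]` equals the covariate-adjusted threshold response
`Σ_{w : P(W=w)>0} P(W=w)·E[Y ∣ A ≥ v, W = w]`. -/
theorem stmt2 {Ω 𝒲 𝒰 : Type*} [MeasurableSpace Ω] [MeasurableSpace 𝒲] [MeasurableSpace 𝒰]
    [Countable 𝒲] [MeasurableSingletonClass 𝒲]
    (μ : Measure Ω) [IsProbabilityMeasure μ]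
    (W : Ω → 𝒲) (A Atil : Ω → ℝ) (U : Ω → 𝒰)
    (hWmeas : Measurable W) (hAmeas : Measurable A) (hAtilmeas : Measurable Atil)
    (hUmeas : Measurable U)
    (f : ℝ → 𝒲 → 𝒰 → ℝ)
    (hfmeas : Measurable (fun p : ℝ × 𝒲 × 𝒰 => f p.1 p.2.1 p.2.2))
    (hf01 : ∀ x w u, f x w u ∈ Set.Icc (0 : ℝ) 1)
    (Y : Ω → ℝ) (hYdef : Y = fun ω => f (A ω) (W ω) (U ω))
    (v : ℝ)
    (hyp : ∀ w : 𝒲, 0 < μ (W ⁻¹' {w}) →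
      (0 < μ ({ω | v ≤ A ω} ∩ W ⁻¹' {w})) ∧
      IndepFun A U (μ[|W ⁻¹' {w}]) ∧
      IndepFun Atil U (μ[|W ⁻¹' {w}]) ∧
      Measure.map Atil (μ[|W ⁻¹' {w}]) =
        Measure.map A (μ[|{ω | v ≤ A ω} ∩ W ⁻¹' {w}])) :
    ∫ ω, f (Atil ω) (W ω) (U ω) ∂μ =
      ∑' w : {w : 𝒲 // 0 < μ (W ⁻¹' {w})},
        (μ (W ⁻¹' {(w : 𝒲)})).toReal *
          ∫ ω, Y ω ∂(μ[|{ω | v ≤ A ω} ∩ W ⁻¹' {(w : 𝒲)}]) := by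
  have hfib : ∀ w, MeasurableSet (W ⁻¹' {w}) := fun w => hWmeas (measurableSet_singleton w)
  have hthreshold : MeasurableSet (A ⁻¹' Set.Ici v) := hAmeas measurableSet_Ici
  subst hYdef
  have hbound : ∀ x w u, ‖f x w u‖ ≤ 1 := fun x w u =>
    abs_le.mpr ⟨by linarith [(hf01 x w u).1], (hf01 x w u).2⟩
  have hint : Integrable (fun ω => f (Atil ω) (W ω) (U ω)) μ :=
    .of_bound (hfmeas.comp (hAtilmeas.prodMk (hWmeas.prodMk hUmeas))).aestronglyMeasurable 1
      (ae_of_all _ fun ω => hbound _ _ _)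
  rw [integral_eq_tsum_measureReal_mul_integral_cond hWmeas hint]
  refine tsum_congr fun ⟨w, hw⟩ => congrArg _ ?_
  obtain ⟨-, hAU, hAtilU, hlaw⟩ := hyp w hw
  have hcond : (μ[|W ⁻¹' {w}])[|A ⁻¹' Set.Ici v] = μ[|{ω | v ≤ A ω} ∩ W ⁻¹' {w}] := by
    rw [cond_cond_eq_cond_inter (hfib w) hthreshold, Set.inter_comm]; rfl
  have hF : StronglyMeasurable fun p : ℝ × 𝒰 => f p.1 w p.2 :=
    (hfmeas.comp (measurable_fst.prodMk (measurable_const.prodMk measurable_snd)))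
      |>.stronglyMeasurable
  calc ∫ ω, f (Atil ω) (W ω) (U ω) ∂(μ[|W ⁻¹' {w}])
      = ∫ ω, f (Atil ω) w (U ω) ∂(μ[|W ⁻¹' {w}]) :=
        integral_congr_ae (by filter_upwards [ae_cond_mem (hfib w)] with ω hω; rw [hω])
    _ = ∫ ω, f (A ω) w (U ω) ∂(μ[|{ω | v ≤ A ω} ∩ W ⁻¹' {w}]) := by
        rw [← hcond] at hlaw ⊢
        exact integral_comp_prodMk_eq_integral_cond hAmeas hAtilmeas hUmeas hAU hAtilU
          measurableSet_Ici hlaw hF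
    _ = ∫ ω, f (A ω) (W ω) (U ω) ∂(μ[|{ω | v ≤ A ω} ∩ W ⁻¹' {w}]) :=
        integral_congr_ae (by
          filter_upwards [ae_cond_mem (hthreshold.inter (hfib w))] with ω hω
          rw [hω.2])
end

section
/- Under the base setup, let D : Ω → ℝ be bounded, σ(W, A, Δ, Y)-measurable with E[D] = 0, and for |ε| < 1/(‖D‖_∞ + 1) let P_ε be the probability measure with density (1 + εD) with respect to P. For a probability measure μ with bounded density with respect to P such that the quantities below are a.s. positive, define Ψᵥ(μ) := E_μ[ E_μ[ (E_μ[YΔ ∣ 𝒢₁]/E_μ[Δ ∣ 𝒢₁])·1{A ≥ v} ∣ 𝒢₀ ] / E_μ[1{A ≥ v} ∣ 𝒢₀] ]. Then the map ε ↦ Ψᵥ(P_ε) is differentiable at ε = 0 with derivative (d/dε) Ψᵥ(P_ε)|_{ε=0} = E[D·D₀], where D₀ is the efficient influence function. -/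
/-!
Under `P_ε = (1 + εD)·P` every conditional expectation is tilted,
`E_ε[f | 𝒢] = (E[f | 𝒢] + ε E[fD | 𝒢]) / (1 + ε E[D | 𝒢])`. Pulling the measurable factors out
of the nested conditional expectations turns `Ψᵥ(P_ε)` into `∫ YΔ 1{A ≥ v} (1 + εD) / (G_ε g_ε) dP`,
a rational function of `ε` whose coefficients are bounded uniformly in `ω`, so it may be
differentiated under the integral sign. At `ε = 0` the derivative is
`E[V (D + E[D | 𝒢₁] + E[D | 𝒢₀] - E[ΔD | 𝒢₁] / G₀ - E[1{A ≥ v} D | 𝒢₀] / g₀)]` with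
`V = YΔ 1{A ≥ v} / (G₀ g₀)`, and self-adjointness of conditional expectation moves each
conditional expectation from `D` onto `V`, which yields `E[D D₀]`; the constant `Ψ₀` drops out
because `E[D] = 0`.
-/

open MeasureTheory
open scoped ENNReal

/-- For an indicator `w`, the conditional mean of `f` given `m` on `{w = 1}`; in the paper's
notation `Q₀ = weightedCondExp 𝒢₁ P Δ Y` and `Q₀ᵥ = weightedCondExp 𝒢₀ P 1{A ≥ v} Q₀`. -/
noncomputable def weightedCondExp {Ω : Type*} (m : MeasurableSpace Ω) [MeasurableSpace Ω]
    (μ : Measure Ω) (w f : Ω → ℝ) : Ω → ℝ :=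
  fun ω => (μ[fun x => f x * w x|m]) ω / (μ[w|m]) ω

section CondExp

variable {Ω : Type*} {m m₀ m₁ : MeasurableSpace Ω} [mΩ : MeasurableSpace Ω] {μ : Measure Ω}

lemma memLp_top_inv_of_le {f : Ω → ℝ} {β : ℝ} (hf : AEStronglyMeasurable f μ) (hβ : 0 < β)
    (hfβ : ∀ᵐ ω ∂μ, β ≤ f ω) : MemLp f⁻¹ ∞ μ := by
  refine memLp_top_of_bound hf.aemeasurable.inv.aestronglyMeasurable β⁻¹ ?_
  filter_upwards [hfβ] with ω hω
  rw [Pi.inv_apply, norm_inv, Real.norm_of_nonneg (hβ.trans_le hω).le]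
  exact inv_anti₀ hβ hω

lemma MeasureTheory.MemLp.div_of_le {f g : Ω → ℝ} {β : ℝ} (hf : MemLp f ∞ μ)
    (hg : AEStronglyMeasurable g μ) (hβ : 0 < β) (hgβ : ∀ᵐ ω ∂μ, β ≤ g ω) :
    MemLp (fun ω => f ω / g ω) ∞ μ :=
  ((memLp_top_inv_of_le hg hβ hgβ).mul hf).ae_eq (.of_forall fun _ => (div_eq_mul_inv _ _).symm)

lemma integral_add_add_sub_sub {f₁ f₂ f₃ f₄ f₅ : Ω → ℝ} (h₁ : Integrable f₁ μ)
    (h₂ : Integrable f₂ μ) (h₃ : Integrable f₃ μ) (h₄ : Integrable f₄ μ) (h₅ : Integrable f₅ μ) :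
    ∫ ω, f₁ ω + f₂ ω + f₃ ω - f₄ ω - f₅ ω ∂μ
      = ∫ ω, f₁ ω ∂μ + ∫ ω, f₂ ω ∂μ + ∫ ω, f₃ ω ∂μ - ∫ ω, f₄ ω ∂μ - ∫ ω, f₅ ω ∂μ := by
  rw [integral_sub, integral_sub, integral_add, integral_add]
  exacts [h₁, h₂, h₁.add h₂, h₃, (h₁.add h₂).add h₃, h₄, ((h₁.add h₂).add h₃).sub h₄, h₅]

lemma condExp_mul_of_memLp_top_left {W X : Ω → ℝ} (hW : StronglyMeasurable[m] W)
    (hW_top : MemLp W ∞ μ) (hX : Integrable X μ) :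
    μ[fun ω => W ω * X ω|m] =ᵐ[μ] fun ω => W ω * (μ[X|m]) ω :=
  condExp_mul_of_stronglyMeasurable_left hW (hX.mul_of_top_right hW_top) hX

lemma integral_mul_condExp_of_stronglyMeasurable (hm : m ≤ mΩ) [SigmaFinite (μ.trim hm)]
    {V X : Ω → ℝ} (hV : StronglyMeasurable[m] V) (hVX : Integrable (V * X) μ)
    (hX : Integrable X μ) :
    ∫ ω, V ω * (μ[X|m]) ω ∂μ = ∫ ω, V ω * X ω ∂μ :=
  (integral_congr_ae (condExp_mul_of_stronglyMeasurable_left hV hVX hX).symm).trans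
    (integral_condExp hm)

lemma integral_mul_condExp_comm [IsFiniteMeasure μ] (hm : m ≤ mΩ) {f g : Ω → ℝ}
    (hf : MemLp f ∞ μ) (hg : Integrable g μ) :
    ∫ ω, f ω * (μ[g|m]) ω ∂μ = ∫ ω, (μ[f|m]) ω * g ω ∂μ := by
  have hpull : ∫ ω, f ω * (μ[g|m]) ω ∂μ = ∫ ω, (μ[f|m]) ω * (μ[g|m]) ω ∂μ :=
    (integral_condExp hm).symm.trans <| integral_congr_ae <|
      condExp_mul_of_stronglyMeasurable_right stronglyMeasurable_condExp
        (integrable_condExp.mul_of_top_right hf) (hf.integrable le_top)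
  rw [hpull, integral_mul_condExp_of_stronglyMeasurable hm stronglyMeasurable_condExp
    (hg.mul_of_top_right (hf.condExp le_top)) hg]

lemma condExp_mul_one_add_mul [IsFiniteMeasure μ] {f D : Ω → ℝ} (hf : Integrable f μ)
    (hfD : Integrable (f * D) μ) (ε : ℝ) :
    μ[fun x => f x * (1 + ε * D x)|m]
      =ᵐ[μ] fun ω => (μ[f|m]) ω + ε * (μ[fun x => f x * D x|m]) ω := by
  have hsplit : (fun x => f x * (1 + ε * D x)) = f + ε • (f * D) := by
    ext x; simp only [Pi.add_apply, Pi.smul_apply, Pi.mul_apply, smul_eq_mul]; ring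
  rw [hsplit]
  filter_upwards [condExp_add hf (hfD.smul ε) m, condExp_smul ε (f * D) m] with ω h1 h2
  rw [h1, Pi.add_apply, h2, Pi.smul_apply, smul_eq_mul]
  rfl

lemma integral_weightedCondExp_weightedCondExp [IsFiniteMeasure μ] (hm₀₁ : m₀ ≤ m₁)
    (hm₁ : m₁ ≤ mΩ) {Y T I : Ω → ℝ} (hYT : Integrable (fun ω => Y ω * T ω) μ)
    (hI : StronglyMeasurable[m₁] I) (hI_top : MemLp I ∞ μ) {β : ℝ} (hβ : 0 < β)
    (hT : ∀ᵐ ω ∂μ, β ≤ (μ[T|m₁]) ω) (hIβ : ∀ᵐ ω ∂μ, β ≤ (μ[I|m₀]) ω) :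
    ∫ ω, weightedCondExp m₀ μ I (weightedCondExp m₁ μ T Y) ω ∂μ
      = ∫ ω, Y ω * T ω * I ω / ((μ[T|m₁]) ω * (μ[I|m₀]) ω) ∂μ := by
  have hG_inv : MemLp (μ[T|m₁])⁻¹ ∞ μ :=
    memLp_top_inv_of_le integrable_condExp.aestronglyMeasurable hβ hT
  have hg_inv : MemLp (μ[I|m₀])⁻¹ ∞ μ :=
    memLp_top_inv_of_le integrable_condExp.aestronglyMeasurable hβ hIβ
  set X : Ω → ℝ := fun ω => weightedCondExp m₁ μ T Y ω * I ω
  set V : Ω → ℝ := fun ω => I ω * ((μ[T|m₁]) ω)⁻¹ * ((μ[I|m₀]) ω)⁻¹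
  have hX : Integrable X μ :=
    (integrable_condExp.mul_of_top_left hG_inv).mul_of_top_left hI_top
  have hV : MemLp V ∞ μ := hg_inv.mul (r := ∞) (hG_inv.mul (r := ∞) hI_top)
  calc ∫ ω, weightedCondExp m₀ μ I (weightedCondExp m₁ μ T Y) ω ∂μ
      = ∫ ω, ((μ[I|m₀]) ω)⁻¹ * (μ[X|m₀]) ω ∂μ := by
        simp only [weightedCondExp, X, div_eq_inv_mul]
    _ = ∫ ω, ((μ[I|m₀]) ω)⁻¹ * X ω ∂μ :=
      integral_mul_condExp_of_stronglyMeasurable (hm₀₁.trans hm₁)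
        stronglyMeasurable_condExp.measurable.inv.stronglyMeasurable
        (hX.mul_of_top_right hg_inv) hX
    _ = ∫ ω, V ω * (μ[fun x => Y x * T x|m₁]) ω ∂μ := by
      refine integral_congr_ae (.of_forall fun ω => ?_)
      simp only [X, V, weightedCondExp, div_eq_mul_inv]
      ring
    _ = ∫ ω, V ω * (Y ω * T ω) ∂μ :=
      integral_mul_condExp_of_stronglyMeasurable hm₁
        ((hI.measurable.mul stronglyMeasurable_condExp.measurable.inv).mul
          (stronglyMeasurable_condExp.mono hm₀₁).measurable.inv).stronglyMeasurable
        (hYT.mul_of_top_right hV) hYT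
    _ = ∫ ω, Y ω * T ω * I ω / ((μ[T|m₁]) ω * (μ[I|m₀]) ω) ∂μ := by
      refine integral_congr_ae (.of_forall fun ω => ?_)
      simp only [V, div_eq_mul_inv, mul_inv]
      ring

lemma setIntegral_withDensity_ofReal {ρ : Ω → ℝ} (hρ : Measurable ρ) (hρ0 : ∀ ω, 0 ≤ ρ ω)
    (ψ : Ω → ℝ) {s : Set Ω} (hs : MeasurableSet s) :
    ∫ ω in s, ψ ω ∂μ.withDensity (fun ω => ENNReal.ofReal (ρ ω)) = ∫ ω in s, ψ ω * ρ ω ∂μ := by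
  rw [setIntegral_withDensity_eq_setIntegral_toReal_smul hρ.ennreal_ofReal
    (.of_forall fun _ => ENNReal.ofReal_lt_top) ψ hs]
  simp only [ENNReal.toReal_ofReal (hρ0 _), smul_eq_mul, mul_comm]

lemma integral_withDensity_ofReal {ρ : Ω → ℝ} (hρ : Measurable ρ) (hρ0 : ∀ ω, 0 ≤ ρ ω)
    (ψ : Ω → ℝ) :
    ∫ ω, ψ ω ∂μ.withDensity (fun ω => ENNReal.ofReal (ρ ω)) = ∫ ω, ψ ω * ρ ω ∂μ := by
  simpa using setIntegral_withDensity_ofReal hρ hρ0 ψ MeasurableSet.univ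

lemma MeasureTheory.MemLp.top_of_absolutelyContinuous {f : Ω → ℝ} {ν : Measure Ω}
    (hf : MemLp f ∞ μ) (hνμ : ν ≪ μ) : MemLp f ∞ ν := by
  refine ⟨hf.aestronglyMeasurable.mono_ac hνμ, ?_⟩
  have hf_ess := hf.eLpNorm_lt_top
  rw [eLpNorm_exponent_top] at hf_ess ⊢
  exact (eLpNormEssSup_mono_measure f hνμ).trans_lt hf_ess

lemma setIntegral_condExp_div_condExp_mul [IsFiniteMeasure μ] (hm : m ≤ mΩ) {ρ f : Ω → ℝ}
    (hρ : MemLp ρ ∞ μ) (hfρ : MemLp (fun x => f x * ρ x) ∞ μ) {l : ℝ} (hl : 0 < l)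
    (hρl : ∀ᵐ ω ∂μ, l ≤ (μ[ρ|m]) ω) {s : Set Ω} (hs : MeasurableSet[m] s) :
    ∫ ω in s, (μ[fun x => f x * ρ x|m]) ω / (μ[ρ|m]) ω * ρ ω ∂μ = ∫ ω in s, f ω * ρ ω ∂μ := by
  set g : Ω → ℝ := fun ω => (μ[fun x => f x * ρ x|m]) ω / (μ[ρ|m]) ω
  have hg_sm : StronglyMeasurable[m] g :=
    (stronglyMeasurable_condExp.measurable.div
      stronglyMeasurable_condExp.measurable).stronglyMeasurable
  have hgρ_int : Integrable (g * ρ) μ :=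
    (hρ.mul ((hfρ.condExp le_top).div_of_le integrable_condExp.aestronglyMeasurable hl
      hρl)).integrable le_top
  calc ∫ ω in s, g ω * ρ ω ∂μ = ∫ ω in s, (μ[g * ρ|m]) ω ∂μ :=
        (setIntegral_condExp hm hgρ_int hs).symm
    _ = ∫ ω in s, (μ[fun x => f x * ρ x|m]) ω ∂μ := by
      refine setIntegral_congr_ae (hm s hs) ?_
      filter_upwards [condExp_mul_of_stronglyMeasurable_left hg_sm hgρ_int
        (hρ.integrable le_top), hρl] with ω h hω _
      rw [h, Pi.mul_apply]
      exact div_mul_cancel₀ _ (hl.trans_le hω).ne'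
    _ = ∫ ω in s, f ω * ρ ω ∂μ := setIntegral_condExp hm (hfρ.integrable le_top) hs

lemma condExp_withDensity_ofReal [IsFiniteMeasure μ] (hm : m ≤ mΩ) {ρ f : Ω → ℝ}
    (hρ : Measurable ρ) {l u : ℝ} (hl : 0 < l) (hρl : ∀ ω, l ≤ ρ ω) (hρu : ∀ ω, ρ ω ≤ u)
    (hf : Measurable f) {B : ℝ} (hfB : ∀ ω, |f ω| ≤ B) :
    (μ.withDensity fun ω => ENNReal.ofReal (ρ ω))[f|m]
      =ᵐ[μ] fun ω => (μ[fun x => f x * ρ x|m]) ω / (μ[ρ|m]) ω := by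
  set ν := μ.withDensity fun ω => ENNReal.ofReal (ρ ω)
  have hρ0 : ∀ ω, 0 ≤ ρ ω := fun ω => hl.le.trans (hρl ω)
  have hρ_top : MemLp ρ ∞ μ := memLp_top_of_bound hρ.aestronglyMeasurable u
    (.of_forall fun ω => by rw [Real.norm_of_nonneg (hρ0 ω)]; exact hρu ω)
  have hfρ_top : MemLp (fun x => f x * ρ x) ∞ μ :=
    hρ_top.mul (memLp_top_of_bound hf.aestronglyMeasurable B (.of_forall hfB))
  have : IsFiniteMeasure ν :=
    isFiniteMeasure_withDensity_ofReal (hρ_top.integrable le_top).hasFiniteIntegral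
  have hνμ : ν ≪ μ := withDensity_absolutelyContinuous μ _
  have hμν : μ ≪ ν := withDensity_absolutelyContinuous'
    hρ.ennreal_ofReal.aemeasurable (.of_forall fun ω => by simpa using hl.trans_le (hρl ω))
  have hρm : ∀ᵐ ω ∂μ, l ≤ (μ[ρ|m]) ω := by
    filter_upwards [condExp_mono (m := m) (integrable_const l) (hρ_top.integrable le_top)
      (.of_forall hρl)] with ω hω
    rwa [condExp_const hm] at hω
  have hg_top : MemLp (fun ω => (μ[fun x => f x * ρ x|m]) ω / (μ[ρ|m]) ω) ∞ μ :=
    (hfρ_top.condExp le_top).div_of_le integrable_condExp.aestronglyMeasurable hl hρm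
  have hg_ν : (fun ω => (μ[fun x => f x * ρ x|m]) ω / (μ[ρ|m]) ω) =ᵐ[ν] ν[f|m] := by
    refine ae_eq_condExp_of_forall_setIntegral_eq hm
      (Integrable.of_bound hf.aestronglyMeasurable B (.of_forall hfB))
      (fun s _ _ => ((hg_top.top_of_absolutelyContinuous hνμ).integrable le_top).integrableOn)
      (fun s hs _ => ?_) (stronglyMeasurable_condExp.measurable.div
        stronglyMeasurable_condExp.measurable).aestronglyMeasurable
    rw [setIntegral_withDensity_ofReal hρ hρ0 _ (hm s hs),
      setIntegral_withDensity_ofReal hρ hρ0 f (hm s hs)]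
    exact setIntegral_condExp_div_condExp_mul hm hρ_top hfρ_top hl hρm hs
  exact (hg_ν.filter_mono hμν.ae_le).symm

lemma ae_sq_le_mul {f g : Ω → ℝ} {δ : ℝ} (hδ : 0 ≤ δ) (hf : ∀ᵐ ω ∂μ, δ ≤ f ω)
    (hg : ∀ᵐ ω ∂μ, δ ≤ g ω) : ∀ᵐ ω ∂μ, δ ^ 2 ≤ f ω * g ω := by
  filter_upwards [hf, hg] with ω h₁ h₂
  rw [sq]; exact mul_le_mul h₁ h₂ hδ (hδ.trans h₁)

lemma hasDerivAt_integral_of_ae_deriv_abs_le [IsFiniteMeasure μ] {F : ℝ → Ω → ℝ}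
    {F'₀ : Ω → ℝ} {r M : ℝ} (hr : 0 < r) (hF : ∀ ε, AEStronglyMeasurable (F ε) μ)
    (hF₀ : Integrable (F 0) μ) (hF'₀ : AEStronglyMeasurable F'₀ μ)
    (hderiv : ∀ᵐ ω ∂μ, ∀ ε ∈ Metric.ball (0 : ℝ) r,
      HasDerivAt (F · ω) (deriv (F · ω) ε) ε ∧ |deriv (F · ω) ε| ≤ M)
    (hderiv₀ : ∀ᵐ ω ∂μ, deriv (F · ω) 0 = F'₀ ω) :
    HasDerivAt (fun ε => ∫ ω, F ε ω ∂μ) (∫ ω, F'₀ ω ∂μ) 0 := by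
  obtain ⟨-, h⟩ := hasDerivAt_integral_of_dominated_loc_of_deriv_le
    (F' := fun ε ω => deriv (F · ω) ε) (Metric.ball_mem_nhds 0 hr) (.of_forall hF) hF₀
    (hF'₀.congr (hderiv₀.mono fun _ h => h.symm))
    (hderiv.mono fun _ h ε hε => (Real.norm_eq_abs _).trans_le (h ε hε).2) (integrable_const M)
    (hderiv.mono fun _ h ε hε => (h ε hε).1)
  rwa [integral_congr_ae hderiv₀] at h

end CondExp

lemma abs_mul_le_of_abs_le {ε x C t : ℝ} (hx : |x| ≤ C) (hεC : |ε| * C ≤ t) : |ε * x| ≤ t := by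
  rw [abs_mul]; exact (mul_le_mul_of_nonneg_left hx (abs_nonneg ε)).trans hεC

lemma abs_mul_le_of_mem_ball {ε C δ : ℝ} (hε : ε ∈ Metric.ball (0 : ℝ) (δ / (2 * (|C| + 1)))) :
    |ε| * C ≤ δ / 2 := by
  rw [Metric.mem_ball, dist_zero_right, Real.norm_eq_abs] at hε
  calc |ε| * C ≤ |ε| * (|C| + 1) :=
        mul_le_mul_of_nonneg_left (by linarith [le_abs_self C]) (abs_nonneg ε)
    _ ≤ δ / (2 * (|C| + 1)) * (|C| + 1) := mul_le_mul_of_nonneg_right hε.le (by positivity)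
    _ = δ / 2 := by field_simp

/-- If `x = μ[f|m]`, `y = μ[f * D|m]` and `z = μ[D|m]`, then `tiltedMean x y z ε` is the
conditional expectation of `f` under `(1 + ε D) • μ`. -/
noncomputable def tiltedMean (x y z ε : ℝ) : ℝ := (x + ε * y) / (1 + ε * z)

section TiltedMean

variable {x y z ε C δ : ℝ}

lemma hasDerivAt_tiltedMean (h : 1 + ε * z ≠ 0) :
    HasDerivAt (tiltedMean x y z) ((y * (1 + ε * z) - (x + ε * y) * z) / (1 + ε * z) ^ 2) ε := by
  have hnum : HasDerivAt (fun ε => x + ε * y) y ε := (hasDerivAt_mul_const y).const_add x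
  have hden : HasDerivAt (fun ε => 1 + ε * z) z ε := (hasDerivAt_mul_const z).const_add 1
  exact hnum.div hden h

variable (hx : δ ≤ x) (hx1 : x ≤ 1) (hy : |y| ≤ C) (hz : |z| ≤ C) (hεC : |ε| * C ≤ δ / 2)
include hx hx1 hy hz hεC

lemma tiltedMean_mem_Icc : tiltedMean x y z ε ∈ Set.Icc (δ / 3) 3 := by
  obtain ⟨hy₁, hy₂⟩ := abs_le.mp (abs_mul_le_of_abs_le hy hεC)
  obtain ⟨hz₁, hz₂⟩ := abs_le.mp (abs_mul_le_of_abs_le hz hεC)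
  have hden : 0 < 1 + ε * z := by linarith
  constructor
  · rw [tiltedMean, le_div_iff₀ hden]; nlinarith
  · rw [tiltedMean, div_le_iff₀ hden]; linarith

lemma abs_deriv_tiltedMean_le : |deriv (tiltedMean x y z) ε| ≤ 12 * C := by
  obtain ⟨hy₁, hy₂⟩ := abs_le.mp (abs_mul_le_of_abs_le hy hεC)
  obtain ⟨hz₁, hz₂⟩ := abs_le.mp (abs_mul_le_of_abs_le hz hεC)
  rw [(hasDerivAt_tiltedMean (by linarith)).deriv]
  have hC : 0 ≤ C := (abs_nonneg y).trans hy
  have hnum : |y * (1 + ε * z) - (x + ε * y) * z| ≤ 3 * C := by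
    have h1 : |1 + ε * z| ≤ 3 / 2 := abs_le.mpr ⟨by linarith, by linarith⟩
    have h2 : |x + ε * y| ≤ 3 / 2 := abs_le.mpr ⟨by linarith, by linarith⟩
    calc _ ≤ |y| * |1 + ε * z| + |x + ε * y| * |z| := by
          rw [← abs_mul, ← abs_mul]; exact abs_sub _ _
      _ ≤ C * (3 / 2) + 3 / 2 * C := by gcongr
      _ = 3 * C := by ring
  have hden : 1 / 4 ≤ (1 + ε * z) ^ 2 := by nlinarith
  rw [abs_div, abs_of_nonneg (sq_nonneg (1 + ε * z)), div_le_iff₀ (by linarith)]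
  calc _ ≤ 3 * C := hnum
    _ = 12 * C * (1 / 4) := by ring
    _ ≤ 12 * C * (1 + ε * z) ^ 2 := by gcongr

end TiltedMean

section TiltedRatio

variable {K c x₁ y₁ z₁ x₂ y₂ z₂ ε C δ : ℝ}

lemma abs_quotient_deriv_le {T₁ T₂ T₁' T₂' : ℝ} (hK : |K| ≤ 1) (hc : |c| ≤ C)
    (h1c : |1 + ε * c| ≤ 3 / 2) (hT₁ : T₁ ∈ Set.Icc (δ / 3) 3) (hT₂ : T₂ ∈ Set.Icc (δ / 3) 3)
    (hT₁' : |T₁'| ≤ 12 * C) (hT₂' : |T₂'| ≤ 12 * C) (hδ : 0 < δ) :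
    |(K * c * (T₁ * T₂) - K * (1 + ε * c) * (T₁' * T₂ + T₁ * T₂')) / (T₁ * T₂) ^ 2|
      ≤ 117 * C / (δ / 3) ^ 4 := by
  obtain ⟨hT₁l, hT₁u⟩ := hT₁
  obtain ⟨hT₂l, hT₂u⟩ := hT₂
  have hC : 0 ≤ C := (abs_nonneg c).trans hc
  have hT₁a : |T₁| ≤ 3 := abs_le.mpr ⟨by linarith, hT₁u⟩
  have hT₂a : |T₂| ≤ 3 := abs_le.mpr ⟨by linarith, hT₂u⟩
  have hnum : |K * c * (T₁ * T₂) - K * (1 + ε * c) * (T₁' * T₂ + T₁ * T₂')| ≤ 117 * C := by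
    calc _ ≤ |K| * |c| * (|T₁| * |T₂|) + |K| * |1 + ε * c| * (|T₁'| * |T₂| + |T₁| * |T₂'|) := by
          refine (abs_sub _ _).trans (add_le_add ?_ ?_)
          · simp only [abs_mul, le_refl]
          · rw [abs_mul, abs_mul]
            gcongr
            exact (abs_add_le _ _).trans (by simp only [abs_mul, le_refl])
      _ ≤ 1 * C * (3 * 3) + 1 * (3 / 2) * (12 * C * 3 + 3 * (12 * C)) := by gcongr
      _ = 117 * C := by ring
  have hP : (δ / 3) ^ 2 ≤ T₁ * T₂ := by
    rw [sq]; exact mul_le_mul hT₁l hT₂l (by positivity) (by linarith)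
  have hP4 : (δ / 3) ^ 4 ≤ (T₁ * T₂) ^ 2 := by
    rw [show (δ / 3) ^ 4 = ((δ / 3) ^ 2) ^ 2 by ring]; gcongr
  rw [abs_div, abs_of_nonneg (sq_nonneg (T₁ * T₂))]
  exact div_le_div₀ (by positivity) hnum (by positivity) hP4

lemma hasDerivAt_tiltedRatio_and_abs_deriv_le (hK : |K| ≤ 1) (hc : |c| ≤ C)
    (hx₁ : δ ≤ x₁) (hx₁' : x₁ ≤ 1) (hy₁ : |y₁| ≤ C) (hz₁ : |z₁| ≤ C)
    (hx₂ : δ ≤ x₂) (hx₂' : x₂ ≤ 1) (hy₂ : |y₂| ≤ C) (hz₂ : |z₂| ≤ C)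
    (hδ : 0 < δ) (hεC : |ε| * C ≤ δ / 2) :
    let F := fun ε => K * (1 + ε * c) / (tiltedMean x₁ y₁ z₁ ε * tiltedMean x₂ y₂ z₂ ε)
    HasDerivAt F (deriv F ε) ε ∧ |deriv F ε| ≤ 117 * C / (δ / 3) ^ 4 := by
  intro F
  have hδ1 : δ ≤ 1 := hx₁.trans hx₁'
  have h1c : |1 + ε * c| ≤ 3 / 2 := by
    obtain ⟨h, h'⟩ := abs_le.mp (abs_mul_le_of_abs_le hc hεC)
    exact abs_le.mpr ⟨by linarith, by linarith⟩
  obtain ⟨hz₁l, -⟩ := abs_le.mp (abs_mul_le_of_abs_le hz₁ hεC)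
  obtain ⟨hz₂l, -⟩ := abs_le.mp (abs_mul_le_of_abs_le hz₂ hεC)
  have hT₁ := (hasDerivAt_tiltedMean (x := x₁) (y := y₁) (by linarith : 1 + ε * z₁ ≠ 0))
  have hT₂ := (hasDerivAt_tiltedMean (x := x₂) (y := y₂) (by linarith : 1 + ε * z₂ ≠ 0))
  rw [← hT₁.deriv] at hT₁
  rw [← hT₂.deriv] at hT₂
  have hI₁ := tiltedMean_mem_Icc hx₁ hx₁' hy₁ hz₁ hεC
  have hI₂ := tiltedMean_mem_Icc hx₂ hx₂' hy₂ hz₂ hεC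
  have hP : 0 < tiltedMean x₁ y₁ z₁ ε * tiltedMean x₂ y₂ z₂ ε :=
    mul_pos (by linarith [hI₁.1]) (by linarith [hI₂.1])
  have hF : HasDerivAt F ((K * c * (tiltedMean x₁ y₁ z₁ ε * tiltedMean x₂ y₂ z₂ ε)
      - K * (1 + ε * c) * (deriv (tiltedMean x₁ y₁ z₁) ε * tiltedMean x₂ y₂ z₂ ε
        + tiltedMean x₁ y₁ z₁ ε * deriv (tiltedMean x₂ y₂ z₂) ε))
      / (tiltedMean x₁ y₁ z₁ ε * tiltedMean x₂ y₂ z₂ ε) ^ 2) ε :=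
    (((hasDerivAt_mul_const c).const_add 1).const_mul K).div (hT₁.mul hT₂) hP.ne'
  rw [hF.deriv]
  exact ⟨hF, abs_quotient_deriv_le hK hc h1c hI₁ hI₂
    (abs_deriv_tiltedMean_le hx₁ hx₁' hy₁ hz₁ hεC)
    (abs_deriv_tiltedMean_le hx₂ hx₂' hy₂ hz₂ hεC) hδ⟩

lemma deriv_tiltedRatio_zero (hx₁ : x₁ ≠ 0) (hx₂ : x₂ ≠ 0) :
    deriv (fun ε => K * (1 + ε * c) / (tiltedMean x₁ y₁ z₁ ε * tiltedMean x₂ y₂ z₂ ε)) 0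
      = K / (x₁ * x₂) * (c + z₁ + z₂ - y₁ / x₁ - y₂ / x₂) := by
  have hT₁ := hasDerivAt_tiltedMean (x := x₁) (y := y₁) (z := z₁) (ε := 0) (by simp)
  have hT₂ := hasDerivAt_tiltedMean (x := x₂) (y := y₂) (z := z₂) (ε := 0) (by simp)
  have hF := (((hasDerivAt_mul_const c).const_add 1).const_mul K).div (hT₁.mul hT₂)
    (by simp [tiltedMean, hx₁, hx₂])
  rw [show (fun ε => K * (1 + ε * c) / (tiltedMean x₁ y₁ z₁ ε * tiltedMean x₂ y₂ z₂ ε))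
    = (fun y => K * (1 + y * c)) / (tiltedMean x₁ y₁ z₁ * tiltedMean x₂ y₂ z₂) from rfl, hF.deriv]
  simp only [tiltedMean, Pi.mul_apply, zero_mul, add_zero, div_one, one_pow, mul_one]
  field_simp
  ring

end TiltedRatio

section Tilted

variable {Ω : Type*} {m m₀ m₁ : MeasurableSpace Ω} [mΩ : MeasurableSpace Ω] {μ : Measure Ω}
  {K T I D Y : Ω → ℝ} {C δ ε : ℝ}

lemma condExp_withDensity_one_add_mul [IsFiniteMeasure μ] (hm : m ≤ mΩ) (hD : Measurable D)
    (hDC : ∀ ω, |D ω| ≤ C) (hεC : |ε| * C ≤ 1 / 2) {f : Ω → ℝ} (hf : Measurable f) {B : ℝ}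
    (hfB : ∀ ω, |f ω| ≤ B) :
    (μ.withDensity fun ω => ENNReal.ofReal (1 + ε * D ω))[f|m]
      =ᵐ[μ] fun ω => tiltedMean ((μ[f|m]) ω) ((μ[fun x => f x * D x|m]) ω) ((μ[D|m]) ω) ε := by
  have hεD : ∀ ω, |ε * D ω| ≤ 1 / 2 := fun ω => abs_mul_le_of_abs_le (hDC ω) hεC
  have hD_int : Integrable D μ := Integrable.of_bound hD.aestronglyMeasurable C (.of_forall hDC)
  have hf_top : MemLp f ∞ μ := memLp_top_of_bound hf.aestronglyMeasurable B (.of_forall hfB)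
  have hnum := condExp_mul_one_add_mul (m := m) (hf_top.integrable le_top)
    (hD_int.mul_of_top_right hf_top) ε
  have hden : μ[fun x => 1 + ε * D x|m] =ᵐ[μ] fun ω => 1 + ε * (μ[D|m]) ω := by
    simpa [condExp_const hm] using condExp_mul_one_add_mul (m := m)
      (f := fun _ => 1) (D := D) (integrable_const (1 : ℝ))
      (hD_int.mul_of_top_right (memLp_top_const 1)) ε
  filter_upwards [condExp_withDensity_ofReal (ρ := fun ω => 1 + ε * D ω) (u := 3 / 2) hm
    (by fun_prop) (by norm_num : (0 : ℝ) < 1 / 2) (fun ω => by linarith [(abs_le.mp (hεD ω)).1])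
    (fun ω => by linarith [(abs_le.mp (hεD ω)).2]) hf hfB, hnum, hden] with ω h h1 h2
  rw [h, h1, h2, tiltedMean]

lemma ae_condExp_tilt_bounds {f : Ω → ℝ} (hf : ∀ ω, |f ω| ≤ 1) (hDC : ∀ ω, |D ω| ≤ C) :
    ∀ᵐ ω ∂μ, (μ[f|m]) ω ≤ 1 ∧ |(μ[fun x => f x * D x|m]) ω| ≤ C ∧ |(μ[D|m]) ω| ≤ C := by
  have hfD : ∀ ω, |f ω * D ω| ≤ C := fun ω => by
    rw [abs_mul]; exact (mul_le_mul (hf ω) (hDC ω) (abs_nonneg _) zero_le_one).trans_eq (one_mul C)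
  filter_upwards [ae_bdd_abs_condExp_of_ae_bdd_abs (m := m) (.of_forall hf),
    ae_bdd_abs_condExp_of_ae_bdd_abs (m := m) (.of_forall hfD),
    ae_bdd_abs_condExp_of_ae_bdd_abs (m := m) (.of_forall hDC)] with ω h₁ h₂ h₃
  exact ⟨(abs_le.mp h₁).2, h₂, h₃⟩

lemma integral_weightedCondExp_withDensity_eq [IsFiniteMeasure μ] (hm₀₁ : m₀ ≤ m₁)
    (hm₁ : m₁ ≤ mΩ) (hY : Measurable Y) (hY1 : ∀ ω, |Y ω| ≤ 1) (hT : Measurable T)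
    (hT1 : ∀ ω, |T ω| ≤ 1) (hI : StronglyMeasurable[m₁] I) (hI1 : ∀ ω, |I ω| ≤ 1)
    (hD : Measurable D) (hDC : ∀ ω, |D ω| ≤ C) (hδ : 0 < δ) (hδ1 : δ ≤ 1)
    (hG : ∀ᵐ ω ∂μ, δ ≤ (μ[T|m₁]) ω) (hg : ∀ᵐ ω ∂μ, δ ≤ (μ[I|m₀]) ω) (hεC : |ε| * C ≤ δ / 2)
    {ν : Measure Ω}
    (hν : ν = μ.withDensity fun ω => ENNReal.ofReal (1 + ε * D ω)) :
    ∫ ω, weightedCondExp m₀ ν I (weightedCondExp m₁ ν T Y) ω ∂ν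
      = ∫ ω, Y ω * T ω * I ω * (1 + ε * D ω) /
          (tiltedMean ((μ[T|m₁]) ω) ((μ[fun x => T x * D x|m₁]) ω) ((μ[D|m₁]) ω) ε
            * tiltedMean ((μ[I|m₀]) ω) ((μ[fun x => I x * D x|m₀]) ω) ((μ[D|m₀]) ω) ε) ∂μ := by
  have hεC' : |ε| * C ≤ 1 / 2 := hεC.trans (by linarith)
  have hρ : ∀ ω, 1 / 2 ≤ 1 + ε * D ω := fun ω => by
    linarith [(abs_le.mp (abs_mul_le_of_abs_le (hDC ω) hεC')).1]
  have hGε := condExp_withDensity_one_add_mul (μ := μ) hm₁ hD hDC hεC' hT hT1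
  have hgε := condExp_withDensity_one_add_mul (μ := μ) (hm₀₁.trans hm₁) hD hDC hεC'
    (hI.mono hm₁).measurable hI1
  have hbounds : ∀ᵐ ω ∂μ,
      δ / 3 ≤ tiltedMean ((μ[T|m₁]) ω) ((μ[fun x => T x * D x|m₁]) ω) ((μ[D|m₁]) ω) ε ∧
      δ / 3 ≤ tiltedMean ((μ[I|m₀]) ω) ((μ[fun x => I x * D x|m₀]) ω) ((μ[D|m₀]) ω) ε := by
    filter_upwards [hG, hg, ae_condExp_tilt_bounds (m := m₁) hT1 hDC,
      ae_condExp_tilt_bounds (m := m₀) hI1 hDC]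
      with ω h₁ h₂ ⟨h₃, h₄, h₅⟩ ⟨h₆, h₇, h₈⟩
    exact ⟨(tiltedMean_mem_Icc h₁ h₃ h₄ h₅ hεC).1, (tiltedMean_mem_Icc h₂ h₆ h₇ h₈ hεC).1⟩
  subst hν
  have hνμ := withDensity_absolutelyContinuous μ fun ω => ENNReal.ofReal (1 + ε * D ω)
  have : IsFiniteMeasure (μ.withDensity fun ω => ENNReal.ofReal (1 + ε * D ω)) :=
    isFiniteMeasure_withDensity_ofReal ((integrable_const 1).add
      ((Integrable.of_bound hD.aestronglyMeasurable C
        (.of_forall hDC)).const_mul ε)).hasFiniteIntegral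
  rw [integral_weightedCondExp_weightedCondExp hm₀₁ hm₁
      (Integrable.of_bound (hY.mul hT).aestronglyMeasurable 1 (.of_forall fun ω => by
        rw [Real.norm_eq_abs, abs_mul]; exact mul_le_one₀ (hY1 ω) (abs_nonneg _) (hT1 ω))) hI
      (memLp_top_of_bound (hI.mono hm₁).aestronglyMeasurable 1 (.of_forall hI1))
      (by positivity : (0 : ℝ) < δ / 3)
      (hνμ.ae_le (by filter_upwards [hGε, hbounds] with ω h hb; rw [h]; exact hb.1))
      (hνμ.ae_le (by filter_upwards [hgε, hbounds] with ω h hb; rw [h]; exact hb.2)),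
    integral_withDensity_ofReal (by fun_prop) (fun ω => by linarith [hρ ω])]
  refine integral_congr_ae ?_
  filter_upwards [hGε, hgε] with ω h₁ h₂
  rw [h₁, h₂, div_mul_eq_mul_div]

lemma hasDerivAt_integral_tiltedRatio [IsFiniteMeasure μ] (hm₀₁ : m₀ ≤ m₁) (hm₁ : m₁ ≤ mΩ)
    (hK : Measurable K) (hK1 : ∀ ω, |K ω| ≤ 1) (hT1 : ∀ ω, |T ω| ≤ 1) (hI1 : ∀ ω, |I ω| ≤ 1)
    (hD : Measurable D) (hDC : ∀ ω, |D ω| ≤ C) (hδ : 0 < δ) (hG : ∀ᵐ ω ∂μ, δ ≤ (μ[T|m₁]) ω)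
    (hg : ∀ᵐ ω ∂μ, δ ≤ (μ[I|m₀]) ω) :
    HasDerivAt (fun ε => ∫ ω, K ω * (1 + ε * D ω) /
        (tiltedMean ((μ[T|m₁]) ω) ((μ[fun x => T x * D x|m₁]) ω) ((μ[D|m₁]) ω) ε
          * tiltedMean ((μ[I|m₀]) ω) ((μ[fun x => I x * D x|m₀]) ω) ((μ[D|m₀]) ω) ε) ∂μ)
      (∫ ω, K ω / ((μ[T|m₁]) ω * (μ[I|m₀]) ω) * (D ω + (μ[D|m₁]) ω + (μ[D|m₀]) ω
        - (μ[fun x => T x * D x|m₁]) ω / (μ[T|m₁]) ω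
        - (μ[fun x => I x * D x|m₀]) ω / (μ[I|m₀]) ω) ∂μ) 0 := by
  set G := μ[T|m₁]
  set g := μ[I|m₀]
  set dG := μ[fun x => T x * D x|m₁]
  set dg := μ[fun x => I x * D x|m₀]
  set eA := μ[D|m₁]
  set eW := μ[D|m₀]
  have hbox : ∀ᵐ ω ∂μ, (δ ≤ G ω ∧ G ω ≤ 1 ∧ |dG ω| ≤ C ∧ |eA ω| ≤ C) ∧
      (δ ≤ g ω ∧ g ω ≤ 1 ∧ |dg ω| ≤ C ∧ |eW ω| ≤ C) := by
    filter_upwards [hG, hg, ae_condExp_tilt_bounds (m := m₁) hT1 hDC,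
      ae_condExp_tilt_bounds (m := m₀) hI1 hDC] with ω h₁ h₂ h₃ h₄
    exact ⟨⟨h₁, h₃⟩, h₂, h₄⟩
  have hG_m : Measurable G := (stronglyMeasurable_condExp.mono hm₁).measurable
  have hg_m : Measurable g := (stronglyMeasurable_condExp.mono (hm₀₁.trans hm₁)).measurable
  have hdG_m : Measurable dG := (stronglyMeasurable_condExp.mono hm₁).measurable
  have hdg_m : Measurable dg := (stronglyMeasurable_condExp.mono (hm₀₁.trans hm₁)).measurable
  have heA_m : Measurable eA := (stronglyMeasurable_condExp.mono hm₁).measurable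
  have heW_m : Measurable eW := (stronglyMeasurable_condExp.mono (hm₀₁.trans hm₁)).measurable
  refine hasDerivAt_integral_of_ae_deriv_abs_le (r := δ / (2 * (|C| + 1)))
    (M := 117 * C / (δ / 3) ^ 4) (by positivity)
    (fun ε => Measurable.aestronglyMeasurable (by simp only [tiltedMean]; fun_prop)) ?_
    (Measurable.aestronglyMeasurable (by fun_prop)) ?_ ?_
  · refine Integrable.of_bound
      (Measurable.aestronglyMeasurable (by simp only [tiltedMean]; fun_prop)) (1 / δ ^ 2) ?_
    filter_upwards [ae_sq_le_mul hδ.le hG hg] with ω hGg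
    simp only [tiltedMean, zero_mul, add_zero, div_one, mul_one, Real.norm_eq_abs, abs_div,
      abs_of_pos ((pow_pos hδ 2).trans_le hGg)]
    exact div_le_div₀ zero_le_one (hK1 ω) (by positivity) hGg
  · filter_upwards [hbox] with ω ⟨⟨h₁, h₂, h₃, h₄⟩, h₅, h₆, h₇, h₈⟩ ε hε
    exact hasDerivAt_tiltedRatio_and_abs_deriv_le (hK1 ω) (hDC ω) h₁ h₂ h₃ h₄ h₅ h₆ h₇ h₈ hδ
      (abs_mul_le_of_mem_ball hε)
  · filter_upwards [hG, hg] with ω h₁ h₂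
    exact deriv_tiltedRatio_zero (hδ.trans_le h₁).ne' (hδ.trans_le h₂).ne'

lemma integral_mul_tilt_adjoint [IsFiniteMeasure μ] (hm₀₁ : m₀ ≤ m₁) (hm₁ : m₁ ≤ mΩ)
    {V G g : Ω → ℝ} (hV : MemLp V ∞ μ) (hVG : MemLp (fun ω => V ω * (G ω)⁻¹) ∞ μ)
    (hVg : MemLp (fun ω => V ω * (g ω)⁻¹) ∞ μ) (hD : Integrable D μ)
    (hTD : Integrable (fun ω => T ω * D ω) μ) (hID : Integrable (fun ω => I ω * D ω) μ)
    (hD_mean : ∫ ω, D ω ∂μ = 0) (c : ℝ) :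
    ∫ ω, V ω * (D ω + (μ[D|m₁]) ω + (μ[D|m₀]) ω - (μ[fun x => T x * D x|m₁]) ω / G ω
        - (μ[fun x => I x * D x|m₀]) ω / g ω) ∂μ
      = ∫ ω, D ω * (V ω + (μ[V|m₁]) ω + (μ[V|m₀]) ω
          - T ω * (μ[fun x => V x * (G x)⁻¹|m₁]) ω - I ω * (μ[fun x => V x * (g x)⁻¹|m₀]) ω
          - c) ∂μ := by
  have hm₀ : m₀ ≤ mΩ := hm₀₁.trans hm₁
  have i₁ : Integrable (fun ω => V ω * D ω) μ := hD.mul_of_top_right hV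
  have i₂ : Integrable (fun ω => V ω * (μ[D|m₁]) ω) μ := integrable_condExp.mul_of_top_right hV
  have i₃ : Integrable (fun ω => V ω * (μ[D|m₀]) ω) μ := integrable_condExp.mul_of_top_right hV
  have i₄ : Integrable (fun ω => V ω * (G ω)⁻¹ * (μ[fun x => T x * D x|m₁]) ω) μ :=
    integrable_condExp.mul_of_top_right hVG
  have i₅ : Integrable (fun ω => V ω * (g ω)⁻¹ * (μ[fun x => I x * D x|m₀]) ω) μ :=
    integrable_condExp.mul_of_top_right hVg
  have j₂ : Integrable (fun ω => (μ[V|m₁]) ω * D ω) μ := hD.mul_of_top_right (hV.condExp le_top)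
  have j₃ : Integrable (fun ω => (μ[V|m₀]) ω * D ω) μ := hD.mul_of_top_right (hV.condExp le_top)
  have j₄ : Integrable (fun ω => (μ[fun x => V x * (G x)⁻¹|m₁]) ω * (T ω * D ω)) μ :=
    hTD.mul_of_top_right (hVG.condExp le_top)
  have j₅ : Integrable (fun ω => (μ[fun x => V x * (g x)⁻¹|m₀]) ω * (I ω * D ω)) μ :=
    hID.mul_of_top_right (hVg.condExp le_top)
  have hJ := (((i₁.add j₂).add j₃).sub j₄).sub j₅
  calc _ = ∫ ω, V ω * D ω + V ω * (μ[D|m₁]) ω + V ω * (μ[D|m₀]) ω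
        - V ω * (G ω)⁻¹ * (μ[fun x => T x * D x|m₁]) ω
        - V ω * (g ω)⁻¹ * (μ[fun x => I x * D x|m₀]) ω ∂μ := by
        congr 1; ext ω; ring
    _ = ∫ ω, V ω * D ω ∂μ + ∫ ω, V ω * (μ[D|m₁]) ω ∂μ + ∫ ω, V ω * (μ[D|m₀]) ω ∂μ
        - ∫ ω, V ω * (G ω)⁻¹ * (μ[fun x => T x * D x|m₁]) ω ∂μ
        - ∫ ω, V ω * (g ω)⁻¹ * (μ[fun x => I x * D x|m₀]) ω ∂μ :=
        integral_add_add_sub_sub i₁ i₂ i₃ i₄ i₅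
    _ = ∫ ω, V ω * D ω ∂μ + ∫ ω, (μ[V|m₁]) ω * D ω ∂μ + ∫ ω, (μ[V|m₀]) ω * D ω ∂μ
        - ∫ ω, (μ[fun x => V x * (G x)⁻¹|m₁]) ω * (T ω * D ω) ∂μ
        - ∫ ω, (μ[fun x => V x * (g x)⁻¹|m₀]) ω * (I ω * D ω) ∂μ := by
        rw [integral_mul_condExp_comm hm₁ hV hD, integral_mul_condExp_comm hm₀ hV hD,
          integral_mul_condExp_comm hm₁ hVG hTD, integral_mul_condExp_comm hm₀ hVg hID]
    _ = ∫ ω, (V ω * D ω + (μ[V|m₁]) ω * D ω + (μ[V|m₀]) ω * D ω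
        - (μ[fun x => V x * (G x)⁻¹|m₁]) ω * (T ω * D ω)
        - (μ[fun x => V x * (g x)⁻¹|m₀]) ω * (I ω * D ω)) - c * D ω ∂μ := by
        rw [integral_sub ?_ (hD.const_mul c), integral_const_mul, hD_mean, mul_zero, sub_zero]
        · exact (integral_add_add_sub_sub i₁ j₂ j₃ j₄ j₅).symm
        · exact hJ
    _ = _ := by congr 1; ext ω; ring

section CanonicalGradient

variable [IsFiniteMeasure μ] (hm₀₁ : m₀ ≤ m₁) (hY : MemLp Y ∞ μ)
  (hT : MemLp T ∞ μ) (hI : StronglyMeasurable[m₁] I) (hI_top : MemLp I ∞ μ) (hδ : 0 < δ)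
  (hG : ∀ᵐ ω ∂μ, δ ≤ (μ[T|m₁]) ω) (hg : ∀ᵐ ω ∂μ, δ ≤ (μ[I|m₀]) ω)
include hm₀₁ hY hT hI hI_top hδ hG hg

lemma condExp_ratio_mul_eq_weightedCondExp {w : Ω → ℝ} (hw : StronglyMeasurable[m₁] w)
    (hw_top : MemLp w ∞ μ) :
    μ[fun ω => Y ω * T ω * I ω / ((μ[T|m₁]) ω * (μ[I|m₀]) ω) * w ω|m₁]
      =ᵐ[μ] fun ω => w ω * (I ω * weightedCondExp m₁ μ T Y ω / (μ[I|m₀]) ω) := by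
  have hGg := ae_sq_le_mul hδ.le hG hg
  have hW : MemLp (fun ω => I ω * w ω / ((μ[T|m₁]) ω * (μ[I|m₀]) ω)) ∞ μ :=
    (hw_top.mul hI_top).div_of_le
      (integrable_condExp.aestronglyMeasurable.mul integrable_condExp.aestronglyMeasurable)
      (by positivity) hGg
  have hW_sm : StronglyMeasurable[m₁] fun ω => I ω * w ω / ((μ[T|m₁]) ω * (μ[I|m₀]) ω) :=
    ((hI.measurable.mul hw.measurable).div (stronglyMeasurable_condExp.measurable.mul
      (stronglyMeasurable_condExp.mono hm₀₁).measurable)).stronglyMeasurable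
  have hV : (fun ω => Y ω * T ω * I ω / ((μ[T|m₁]) ω * (μ[I|m₀]) ω) * w ω)
      = fun ω => I ω * w ω / ((μ[T|m₁]) ω * (μ[I|m₀]) ω) * (Y ω * T ω) := by
    ext ω; ring
  rw [hV]
  filter_upwards [condExp_mul_of_memLp_top_left (X := fun x => Y x * T x) hW_sm hW
    ((hT.mul hY).integrable le_top)] with ω h
  rw [h, weightedCondExp]
  ring

lemma condExp_ratio_mul_eq_weightedCondExp_weightedCondExp (hm₁ : m₁ ≤ mΩ) {w : Ω → ℝ}
    (hw : StronglyMeasurable[m₀] w) (hw_top : MemLp w ∞ μ) :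
    μ[fun ω => Y ω * T ω * I ω / ((μ[T|m₁]) ω * (μ[I|m₀]) ω) * w ω|m₀]
      =ᵐ[μ] fun ω => w ω * weightedCondExp m₀ μ I (weightedCondExp m₁ μ T Y) ω := by
  have hQ : MemLp (weightedCondExp m₁ μ T Y) ∞ μ :=
    ((hT.mul hY).condExp le_top).div_of_le integrable_condExp.aestronglyMeasurable hδ hG
  have hwg : MemLp (fun ω => w ω / (μ[I|m₀]) ω) ∞ μ :=
    hw_top.div_of_le integrable_condExp.aestronglyMeasurable hδ hg
  have hre : (fun ω => w ω * (I ω * weightedCondExp m₁ μ T Y ω / (μ[I|m₀]) ω))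
      = fun ω => w ω / (μ[I|m₀]) ω * (weightedCondExp m₁ μ T Y ω * I ω) := by
    ext ω; ring
  filter_upwards [(condExp_condExp_of_le (f := fun ω => Y ω * T ω * I ω /
      ((μ[T|m₁]) ω * (μ[I|m₀]) ω) * w ω) hm₀₁ hm₁).symm,
    condExp_congr_ae (m := m₀) (condExp_ratio_mul_eq_weightedCondExp hm₀₁ hY hT hI hI_top hδ
      hG hg (hw.mono hm₀₁) hw_top),
    condExp_mul_of_memLp_top_left (W := fun ω => w ω / (μ[I|m₀]) ω)
      (X := fun ω => weightedCondExp m₁ μ T Y ω * I ω)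
      (hw.measurable.div stronglyMeasurable_condExp.measurable).stronglyMeasurable hwg
      ((hI_top.mul hQ).integrable le_top)] with ω h₁ h₂ h₃
  rw [h₁, h₂, hre, h₃, weightedCondExp]
  ring

lemma integral_tiltedRatio_deriv_eq (hm₁ : m₁ ≤ mΩ) (hD : MemLp D ∞ μ)
    (hD_mean : ∫ ω, D ω ∂μ = 0) (Ψ : ℝ) :
    ∫ ω, Y ω * T ω * I ω / ((μ[T|m₁]) ω * (μ[I|m₀]) ω) * (D ω + (μ[D|m₁]) ω + (μ[D|m₀]) ω
        - (μ[fun x => T x * D x|m₁]) ω / (μ[T|m₁]) ω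
        - (μ[fun x => I x * D x|m₀]) ω / (μ[I|m₀]) ω) ∂μ
      = ∫ ω, D ω * (I ω / (μ[I|m₀]) ω * (T ω / (μ[T|m₁]) ω) * (Y ω - weightedCondExp m₁ μ T Y ω)
          + I ω / (μ[I|m₀]) ω * (weightedCondExp m₁ μ T Y ω
            - weightedCondExp m₀ μ I (weightedCondExp m₁ μ T Y) ω)
          + (weightedCondExp m₀ μ I (weightedCondExp m₁ μ T Y) ω - Ψ)) ∂μ := by
  have hGg := ae_sq_le_mul hδ.le hG hg
  have hV : MemLp (fun ω => Y ω * T ω * I ω / ((μ[T|m₁]) ω * (μ[I|m₀]) ω)) ∞ μ :=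
    (hI_top.mul (r := ∞) (hT.mul (r := ∞) hY)).div_of_le
      (integrable_condExp.aestronglyMeasurable.mul integrable_condExp.aestronglyMeasurable)
      (by positivity) hGg
  have hG_inv := memLp_top_inv_of_le integrable_condExp.aestronglyMeasurable hδ hG
  have hg_inv := memLp_top_inv_of_le integrable_condExp.aestronglyMeasurable hδ hg
  have hD_int := hD.integrable le_top
  rw [integral_mul_tilt_adjoint hm₀₁ hm₁ hV (hG_inv.mul hV) (hg_inv.mul hV) hD_int
    ((hT.integrable le_top).mul_of_top_left hD) (hD_int.mul_of_top_right hI_top) hD_mean Ψ]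
  refine integral_congr_ae ?_
  filter_upwards [
    condExp_ratio_mul_eq_weightedCondExp hm₀₁ hY hT hI hI_top hδ hG hg
      stronglyMeasurable_const (memLp_top_const 1),
    condExp_ratio_mul_eq_weightedCondExp_weightedCondExp hm₀₁ hY hT hI hI_top hδ hG hg hm₁
      stronglyMeasurable_const (memLp_top_const 1),
    condExp_ratio_mul_eq_weightedCondExp hm₀₁ hY hT hI hI_top hδ hG hg
      (w := fun ω => ((μ[T|m₁]) ω)⁻¹) stronglyMeasurable_condExp.measurable.inv.stronglyMeasurable
      hG_inv,
    condExp_ratio_mul_eq_weightedCondExp_weightedCondExp hm₀₁ hY hT hI hI_top hδ hG hg hm₁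
      (w := fun ω => ((μ[I|m₀]) ω)⁻¹) stronglyMeasurable_condExp.measurable.inv.stronglyMeasurable
      hg_inv] with ω e₁ e₀ eG eg
  simp only [mul_one] at e₁ e₀
  rw [e₁, e₀, eG, eg]
  simp only [weightedCondExp]
  ring

end CanonicalGradient

theorem hasDerivAt_integral_weightedCondExp_withDensity [IsFiniteMeasure μ] (hm₀₁ : m₀ ≤ m₁)
    (hm₁ : m₁ ≤ mΩ) (hY : Measurable Y) (hY1 : ∀ ω, |Y ω| ≤ 1) (hT : Measurable T)
    (hT1 : ∀ ω, |T ω| ≤ 1) (hI : StronglyMeasurable[m₁] I) (hI1 : ∀ ω, |I ω| ≤ 1)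
    (hD : Measurable D) (hDC : ∀ ω, |D ω| ≤ C) (hD_mean : ∫ ω, D ω ∂μ = 0) (hδ : 0 < δ)
    (hδ1 : δ ≤ 1) (hG : ∀ᵐ ω ∂μ, δ ≤ (μ[T|m₁]) ω) (hg : ∀ᵐ ω ∂μ, δ ≤ (μ[I|m₀]) ω) (Ψ : ℝ)
    {P : ℝ → Measure Ω} (hP : ∀ ε, P ε = μ.withDensity fun ω => ENNReal.ofReal (1 + ε * D ω)) :
    HasDerivAt (fun ε => ∫ ω, weightedCondExp m₀ (P ε) I (weightedCondExp m₁ (P ε) T Y) ω ∂P ε)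
      (∫ ω, D ω * (I ω / (μ[I|m₀]) ω * (T ω / (μ[T|m₁]) ω) * (Y ω - weightedCondExp m₁ μ T Y ω)
          + I ω / (μ[I|m₀]) ω * (weightedCondExp m₁ μ T Y ω
            - weightedCondExp m₀ μ I (weightedCondExp m₁ μ T Y) ω)
          + (weightedCondExp m₀ μ I (weightedCondExp m₁ μ T Y) ω - Ψ)) ∂μ) 0 := by
  have hderiv := hasDerivAt_integral_tiltedRatio (K := fun ω => Y ω * T ω * I ω) hm₀₁ hm₁
    ((hY.mul hT).mul (hI.mono hm₁).measurable)
    (fun ω => by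
      simp only [abs_mul]
      exact mul_le_one₀ (mul_le_one₀ (hY1 ω) (abs_nonneg _) (hT1 ω)) (abs_nonneg _) (hI1 ω))
    hT1 hI1 hD hDC hδ hG hg
  refine (hderiv.congr_deriv (integral_tiltedRatio_deriv_eq hm₀₁
    (MemLp.of_bound hY.aestronglyMeasurable 1 (.of_forall hY1))
    (MemLp.of_bound hT.aestronglyMeasurable 1 (.of_forall hT1)) hI
    (MemLp.of_bound (hI.mono hm₁).aestronglyMeasurable 1 (.of_forall hI1)) hδ hG hg hm₁
    (MemLp.of_bound hD.aestronglyMeasurable C (.of_forall hDC)) hD_mean Ψ)).congr_of_eventuallyEq ?_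
  filter_upwards [Metric.ball_mem_nhds (0 : ℝ) (by positivity : 0 < δ / (2 * (|C| + 1)))]
    with ε hε
  exact integral_weightedCondExp_withDensity_eq hm₀₁ hm₁ hY hY1 hT hT1 hI hI1 hD hDC hδ hδ1 hG hg
    (abs_mul_le_of_mem_ball hε) (hP ε)

end Tilted

theorem stmt7_general
    {Ω 𝒲 : Type*} [mΩ : MeasurableSpace Ω] [MeasurableSpace 𝒲]
    (μ : Measure Ω) [IsProbabilityMeasure μ]
    (W : Ω → 𝒲) (A Δ Y : Ω → ℝ)
    (hWmeas : Measurable W) (hAmeas : Measurable A)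
    (hΔmeas : Measurable Δ) (hYmeas : Measurable Y)
    (hΔ01 : ∀ ω, Δ ω = 0 ∨ Δ ω = 1) (hY01 : ∀ ω, Y ω ∈ Set.Icc (0 : ℝ) 1)
    (v δ : ℝ) (hδ0 : 0 < δ) (hδ1 : δ < 1)
    (m0 m1 : MeasurableSpace Ω)
    (hm0 : m0 = MeasurableSpace.comap W inferInstance)
    (hm1 : m1 = MeasurableSpace.comap (fun ω => (A ω, W ω)) inferInstance)
    (G₀ g₀ Q₀ Q₀ᵥ : Ω → ℝ) (Ψ₀ : ℝ)
    (hG₀ : G₀ = μ[Δ | m1])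
    (hg₀ : g₀ = μ[fun ω => if v ≤ A ω then (1 : ℝ) else 0 | m0])
    (hQ₀ : Q₀ = fun ω => ((μ[fun ω' => Y ω' * Δ ω' | m1]) ω) / G₀ ω)
    (hQ₀ᵥ : Q₀ᵥ = fun ω =>
      ((μ[fun ω' => Q₀ ω' * (if v ≤ A ω' then (1 : ℝ) else 0) | m0]) ω) / g₀ ω)
    (hG₀pos : ∀ᵐ ω ∂μ, δ ≤ G₀ ω)
    (hg₀pos : ∀ᵐ ω ∂μ, δ ≤ g₀ ω)
    (D₀ : Ω → ℝ)
    (hD₀ : D₀ = fun ω =>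
      ((if v ≤ A ω then (1 : ℝ) else 0) / g₀ ω) * (Δ ω / G₀ ω) * (Y ω - Q₀ ω)
      + ((if v ≤ A ω then (1 : ℝ) else 0) / g₀ ω) * (Q₀ ω - Q₀ᵥ ω) + (Q₀ᵥ ω - Ψ₀))
    (D : Ω → ℝ) (C : ℝ) (hDbound : ∀ ω, |D ω| ≤ C)
    (hDmeas : Measurable[MeasurableSpace.comap
      (fun ω => (W ω, A ω, Δ ω, Y ω)) inferInstance] D)
    (hDmean : ∫ ω, D ω ∂μ = 0)
    (Pe : ℝ → @Measure Ω mΩ)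
    (hPe : ∀ ε, Pe ε = μ.withDensity (fun ω => ENNReal.ofReal (1 + ε * D ω)))
    (Ψv : @Measure Ω mΩ → ℝ)
    (hΨv : ∀ ν : @Measure Ω mΩ, Ψv ν =
      ∫ ω, ((ν[fun ω' => (((ν[fun ω'' => Y ω'' * Δ ω'' | m1]) ω') / ((ν[Δ | m1]) ω'))
            * (if v ≤ A ω' then (1 : ℝ) else 0) | m0]) ω)
          / ((ν[fun ω' => if v ≤ A ω' then (1 : ℝ) else 0 | m0]) ω) ∂ν) :
    HasDerivAt (fun ε => Ψv (Pe ε)) (∫ ω, D ω * D₀ ω ∂μ) 0 := by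
  subst hm0 hm1 hG₀ hg₀ hQ₀ hQ₀ᵥ hD₀
  set I : Ω → ℝ := fun ω => if v ≤ A ω then 1 else 0
  have hm₁ : MeasurableSpace.comap (fun ω => (A ω, W ω)) inferInstance ≤ mΩ :=
    (hAmeas.prodMk hWmeas).comap_le
  have hm₀₁ : MeasurableSpace.comap W inferInstance
      ≤ MeasurableSpace.comap (fun ω => (A ω, W ω)) inferInstance :=
    MeasurableSpace.comap_le_iff_le_map.mpr fun s hs => ⟨Prod.snd ⁻¹' s, measurable_snd hs, rfl⟩
  have hI : StronglyMeasurable[MeasurableSpace.comap (fun ω => (A ω, W ω)) inferInstance] I :=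
    (Measurable.ite (measurableSet_le measurable_const
      (measurable_fst.comp (Measurable.of_comap_le le_rfl))) measurable_const
      measurable_const).stronglyMeasurable
  have hI1 : ∀ ω, |I ω| ≤ 1 := fun ω => by simp only [I]; split_ifs <;> simp
  have hΔ1 : ∀ ω, |Δ ω| ≤ 1 := fun ω => by rcases hΔ01 ω with h | h <;> simp [h]
  have hY1 : ∀ ω, |Y ω| ≤ 1 := fun ω => abs_le.mpr ⟨by linarith [(hY01 ω).1], (hY01 ω).2⟩
  have hD : Measurable D := hDmeas.mono
    (hWmeas.prodMk (hAmeas.prodMk (hΔmeas.prodMk hYmeas))).comap_le le_rfl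
  exact (hasDerivAt_integral_weightedCondExp_withDensity hm₀₁ hm₁ hYmeas hY1 hΔmeas hΔ1 hI hI1
    hD hDbound hDmean hδ0 hδ1.le hG₀pos hg₀pos Ψ₀ hPe).congr_of_eventuallyEq
    (.of_forall fun ε => hΨv (Pe ε))

/-- pathwise differentiability of the threshold-response parameter along the
submodel `P_ε = (1 + εD)·P`, with derivative `E[D·D₀]` at `ε = 0` (canonical gradient
characterization of the efficient influence function, Lemma 1). -/
theorem stmt7
    {Ω 𝒲 : Type*} [mΩ : MeasurableSpace Ω] [MeasurableSpace 𝒲]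
    (μ : Measure Ω) [IsProbabilityMeasure μ]
    (W : Ω → 𝒲) (A Δ Y : Ω → ℝ)
    (hWmeas : Measurable W) (hAmeas : Measurable A)
    (hΔmeas : Measurable Δ) (hYmeas : Measurable Y)
    (hΔ01 : ∀ ω, Δ ω = 0 ∨ Δ ω = 1) (hY01 : ∀ ω, Y ω ∈ Set.Icc (0 : ℝ) 1)
    (v δ : ℝ) (hδ0 : 0 < δ) (hδ1 : δ < 1)
    (m0 m1 m2 : MeasurableSpace Ω)
    (hm0 : m0 = MeasurableSpace.comap W inferInstance)
    (hm1 : m1 = MeasurableSpace.comap (fun ω => (A ω, W ω)) inferInstance)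
    (hm2 : m2 = MeasurableSpace.comap (fun ω => (A ω, W ω, Δ ω)) inferInstance)
    (G₀ g₀ Q₀ Q₀ᵥ : Ω → ℝ) (Ψ₀ : ℝ)
    (hG₀ : G₀ = μ[Δ | m1])
    (hg₀ : g₀ = μ[fun ω => if v ≤ A ω then (1 : ℝ) else 0 | m0])
    (hQ₀ : Q₀ = fun ω => ((μ[fun ω' => Y ω' * Δ ω' | m1]) ω) / G₀ ω)
    (hQ₀ᵥ : Q₀ᵥ = fun ω =>
      ((μ[fun ω' => Q₀ ω' * (if v ≤ A ω' then (1 : ℝ) else 0) | m0]) ω) / g₀ ω)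
    (hΨ₀ : Ψ₀ = ∫ ω, Q₀ᵥ ω ∂μ)
    (hG₀pos : ∀ᵐ ω ∂μ, δ ≤ G₀ ω)
    (hg₀pos : ∀ᵐ ω ∂μ, δ ≤ g₀ ω)
    (D₀ : Ω → ℝ)
    (hD₀ : D₀ = fun ω =>
      ((if v ≤ A ω then (1 : ℝ) else 0) / g₀ ω) * (Δ ω / G₀ ω) * (Y ω - Q₀ ω)
      + ((if v ≤ A ω then (1 : ℝ) else 0) / g₀ ω) * (Q₀ ω - Q₀ᵥ ω) + (Q₀ᵥ ω - Ψ₀))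
    (D : Ω → ℝ) (C : ℝ) (hDbound : ∀ ω, |D ω| ≤ C)
    (hDmeas : Measurable[MeasurableSpace.comap
      (fun ω => (W ω, A ω, Δ ω, Y ω)) inferInstance] D)
    (hDmean : ∫ ω, D ω ∂μ = 0)
    (Pe : ℝ → @Measure Ω mΩ)
    (hPe : ∀ ε, Pe ε = μ.withDensity (fun ω => ENNReal.ofReal (1 + ε * D ω)))
    (Ψv : @Measure Ω mΩ → ℝ)
    (hΨv : ∀ ν : @Measure Ω mΩ, Ψv ν =
      ∫ ω, ((ν[fun ω' => (((ν[fun ω'' => Y ω'' * Δ ω'' | m1]) ω') / ((ν[Δ | m1]) ω'))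
            * (if v ≤ A ω' then (1 : ℝ) else 0) | m0]) ω)
          / ((ν[fun ω' => if v ≤ A ω' then (1 : ℝ) else 0 | m0]) ω) ∂ν) :
    HasDerivAt (fun ε => Ψv (Pe ε)) (∫ ω, D ω * D₀ ω ∂μ) 0 :=
  stmt7_general (mΩ := mΩ) μ W A Δ Y hWmeas hAmeas hΔmeas hYmeas hΔ01 hY01 v δ hδ0 hδ1 m0 m1 hm0 hm1
    G₀ g₀ Q₀ Q₀ᵥ Ψ₀ hG₀ hg₀ hQ₀ hQ₀ᵥ hG₀pos hg₀pos D₀ hD₀ D C hDbound hDmeas hDmean Pe hPe Ψv hΨv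
end

section
/- Let (Ω, ℱ, P) be a probability space, A : Ω → ℝ and Y : Ω → [0,1] measurable, v ∈ ℝ with P(A ≥ v) > 0. Let D : Ω → ℝ be bounded measurable with E[D] = 0, and for |ε| < 1/(‖D‖_∞ + 1) let P_ε := (1 + εD)·P. Define Ψᵘ(μ) := E_μ[Y·1{A ≥ v}]/μ(A ≥ v). Then ε ↦ Ψᵘ(P_ε) is differentiable at ε = 0 with derivative E[D·D̃₀], where D̃₀ := (1{A ≥ v}/P(A ≥ v))·(Y − E[Y·1{A ≥ v}]/P(A ≥ v)) is the efficient influence function of the unadjusted threshold-response. -/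
/-!
For small `|ε|` the density `1 + εD` is nonnegative, so `E_{P_ε}[h] = E[h] + ε E[D h]` is affine
in `ε` for every integrable `h`. Near `ε = 0`, `Ψᵘ(P_ε)` is therefore a quotient of two affine
functions of `ε`, and the quotient rule gives the derivative
`E[D f] / E[g] - E[f] E[D g] / E[g]²` with `f = Y·1{A ≥ v}` and `g = 1{A ≥ v}`; expanding
`E[D·D̃₀]` by linearity gives the same expression.
-/

open MeasureTheory Filter Topology

lemma eventually_forall_nonneg_one_add_mul {Ω : Type*} {D : Ω → ℝ} {C : ℝ}
    (hD : ∀ ω, |D ω| ≤ C) :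
    ∀ᶠ ε in 𝓝 (0 : ℝ), ∀ ω, 0 ≤ 1 + ε * D ω := by
  have hlim : Tendsto (fun ε : ℝ => |ε| * |C|) (𝓝 0) (𝓝 (|0| * |C|)) :=
    (continuous_abs.mul continuous_const).tendsto 0
  filter_upwards [hlim.eventually (gt_mem_nhds (show |(0 : ℝ)| * |C| < 1 by simp))] with ε hε ω
  have hεD : |ε * D ω| ≤ |ε| * |C| := by
    rw [abs_mul]
    exact mul_le_mul_of_nonneg_left ((hD ω).trans (le_abs_self C)) (abs_nonneg ε)
  linarith [neg_abs_le (ε * D ω)]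

section

variable {Ω : Type*} [MeasurableSpace Ω] {μ : Measure Ω} {D : Ω → ℝ}

lemma integral_withDensity_ofReal_one_add_mul (hD : Measurable D) {ε : ℝ}
    (hε : ∀ ω, 0 ≤ 1 + ε * D ω) {g : Ω → ℝ} (hg : Integrable g μ)
    (hDg : Integrable (fun ω => D ω * g ω) μ) :
    ∫ ω, g ω ∂μ.withDensity (fun ω => ENNReal.ofReal (1 + ε * D ω)) =
      ∫ ω, g ω ∂μ + ε * ∫ ω, D ω * g ω ∂μ := by
  rw [integral_withDensity_eq_integral_toReal_smul (by fun_prop)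
    (ae_of_all _ fun _ => ENNReal.ofReal_lt_top)]
  simp_rw [ENNReal.toReal_ofReal (hε _), smul_eq_mul, add_mul, one_mul, mul_assoc]
  rw [integral_add hg (hDg.const_mul ε), integral_const_mul]

lemma hasDerivAt_affine_div_affine {a b c d : ℝ} (hc : c ≠ 0) :
    HasDerivAt (fun ε => (a + ε * b) / (c + ε * d)) (b / c - a * d / c ^ 2) 0 := by
  have hnum : HasDerivAt (fun ε : ℝ => a + ε * b) b 0 := (hasDerivAt_mul_const b).const_add a
  have hden : HasDerivAt (fun ε : ℝ => c + ε * d) d 0 := (hasDerivAt_mul_const d).const_add c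
  have hquot := hnum.div hden (by simpa using hc)
  simp only [zero_mul, add_zero] at hquot
  rwa [show b / c - a * d / c ^ 2 = (b * c - a * d) / c ^ 2 by field_simp]

theorem hasDerivAt_integral_div_integral_withDensity {C : ℝ} (hD : Measurable D)
    (hDC : ∀ ω, |D ω| ≤ C) {f g : Ω → ℝ} (hf : Integrable f μ) (hg : Integrable g μ)
    (hg0 : ∫ ω, g ω ∂μ ≠ 0) :
    HasDerivAt
      (fun ε => (∫ ω, f ω ∂μ.withDensity (fun ω => ENNReal.ofReal (1 + ε * D ω))) /
        ∫ ω, g ω ∂μ.withDensity (fun ω => ENNReal.ofReal (1 + ε * D ω)))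
      ((∫ ω, D ω * f ω ∂μ) / (∫ ω, g ω ∂μ) -
        (∫ ω, f ω ∂μ) * (∫ ω, D ω * g ω ∂μ) / (∫ ω, g ω ∂μ) ^ 2) 0 := by
  have hDbdd : ∀ᵐ ω ∂μ, ‖D ω‖ ≤ C := ae_of_all _ hDC
  have hDf := hf.bdd_mul hD.aestronglyMeasurable hDbdd
  have hDg := hg.bdd_mul hD.aestronglyMeasurable hDbdd
  refine (hasDerivAt_affine_div_affine hg0).congr_of_eventuallyEq ?_
  filter_upwards [eventually_forall_nonneg_one_add_mul hDC] with ε hε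
  rw [integral_withDensity_ofReal_one_add_mul hD hε hf hDf,
    integral_withDensity_ofReal_one_add_mul hD hε hg hDg]

lemma integral_mul_div_mul_sub_div {Y g : Ω → ℝ} (M N : ℝ)
    (hDYg : Integrable (fun ω => D ω * (Y ω * g ω)) μ) (hDg : Integrable (fun ω => D ω * g ω) μ) :
    ∫ ω, D ω * (g ω / M * (Y ω - N / M)) ∂μ =
      (∫ ω, D ω * (Y ω * g ω) ∂μ) / M - N * (∫ ω, D ω * g ω ∂μ) / M ^ 2 := by
  have hexpand : ∀ ω, D ω * (g ω / M * (Y ω - N / M)) =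
      M⁻¹ * (D ω * (Y ω * g ω)) - N / M ^ 2 * (D ω * g ω) := fun ω => by ring
  rw [integral_congr_ae (ae_of_all _ hexpand), integral_sub (hDYg.const_mul _) (hDg.const_mul _),
    integral_const_mul, integral_const_mul]
  ring

end

theorem stmt8_general {Ω : Type*} [MeasurableSpace Ω] (μ : Measure Ω) [IsProbabilityMeasure μ]
    (A Y : Ω → ℝ) (hAmeas : Measurable A) (hYmeas : Measurable Y)
    (hY01 : ∀ ω, Y ω ∈ Set.Icc (0 : ℝ) 1)
    (v : ℝ) (hpos : 0 < μ {ω | v ≤ A ω})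
    (D : Ω → ℝ) (hDmeas : Measurable D) (C : ℝ) (hDbound : ∀ ω, |D ω| ≤ C)
    (Pe : ℝ → Measure Ω)
    (hPe : ∀ ε, Pe ε = μ.withDensity (fun ω => ENNReal.ofReal (1 + ε * D ω)))
    (Ψu : Measure Ω → ℝ)
    (hΨu : ∀ ν : Measure Ω, Ψu ν =
      (∫ ω, Y ω * (if v ≤ A ω then (1 : ℝ) else 0) ∂ν) / (ν {ω | v ≤ A ω}).toReal)
    (D₀ : Ω → ℝ)
    (hD₀ : D₀ = fun ω =>
      ((if v ≤ A ω then (1 : ℝ) else 0) / (μ {ω' | v ≤ A ω'}).toReal) *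
        (Y ω - (∫ ω', Y ω' * (if v ≤ A ω' then (1 : ℝ) else 0) ∂μ) /
          (μ {ω' | v ≤ A ω'}).toReal)) :
    HasDerivAt (fun ε => Ψu (Pe ε)) (∫ ω, D ω * D₀ ω ∂μ) 0 := by
  set S := {ω | v ≤ A ω}
  have hS : MeasurableSet S := hAmeas measurableSet_Ici
  set ind : Ω → ℝ := fun ω => if v ≤ A ω then 1 else 0
  have hind : ind = S.indicator 1 := by
    funext ω
    simp [ind, S, Set.indicator_apply]
  have hmass : ∀ ν : Measure Ω, (ν S).toReal = ∫ ω, ind ω ∂ν := fun ν => by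
    rw [hind, integral_indicator_one hS, measureReal_def]
  have hY : Integrable Y μ := .of_mem_Icc 0 1 hYmeas.aemeasurable (ae_of_all _ hY01)
  have hg : Integrable ind μ := hind ▸ (integrable_const 1).indicator hS
  have hf : Integrable (fun ω => Y ω * ind ω) μ := by
    refine hY.mul_bdd hg.aestronglyMeasurable (c := 1) (ae_of_all _ fun ω => ?_)
    by_cases h : v ≤ A ω <;> simp [ind, h]
  have hg0 : ∫ ω, ind ω ∂μ ≠ 0 := by
    rw [← hmass]
    exact (ENNReal.toReal_pos hpos.ne' (measure_ne_top _ _)).ne'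
  have hΨ : (fun ε => Ψu (Pe ε)) = fun ε =>
      (∫ ω, Y ω * ind ω ∂Pe ε) / ∫ ω, ind ω ∂Pe ε := by
    funext ε
    rw [hΨu, hmass]
  have hDbdd : ∀ᵐ ω ∂μ, ‖D ω‖ ≤ C := ae_of_all _ hDbound
  have hEIF : ∫ ω, D ω * D₀ ω ∂μ = (∫ ω, D ω * (Y ω * ind ω) ∂μ) / (∫ ω, ind ω ∂μ) -
      (∫ ω, Y ω * ind ω ∂μ) * (∫ ω, D ω * ind ω ∂μ) / (∫ ω, ind ω ∂μ) ^ 2 := by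
    rw [hD₀, hmass]
    exact integral_mul_div_mul_sub_div _ _ (hf.bdd_mul hDmeas.aestronglyMeasurable hDbdd)
      (hg.bdd_mul hDmeas.aestronglyMeasurable hDbdd)
  simp_rw [hΨ, hEIF, hPe]
  exact hasDerivAt_integral_div_integral_withDensity hDmeas hDbound hf hg hg0

/-- the unadjusted threshold-response `Ψᵘ(μ) = E_μ[Y·1{A ≥ v}]/μ(A ≥ v)` is
pathwise differentiable along `P_ε = (1 + εD)·P` at `ε = 0` with derivative `E[D·D̃₀]`,
where `D̃₀` is its efficient influence function. -/
theorem stmt8 {Ω : Type*} [MeasurableSpace Ω] (μ : Measure Ω) [IsProbabilityMeasure μ]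
    (A Y : Ω → ℝ) (hAmeas : Measurable A) (hYmeas : Measurable Y)
    (hY01 : ∀ ω, Y ω ∈ Set.Icc (0 : ℝ) 1)
    (v : ℝ) (hpos : 0 < μ {ω | v ≤ A ω})
    (D : Ω → ℝ) (hDmeas : Measurable D) (C : ℝ) (hDbound : ∀ ω, |D ω| ≤ C)
    (hDmean : ∫ ω, D ω ∂μ = 0)
    (Pe : ℝ → Measure Ω)
    (hPe : ∀ ε, Pe ε = μ.withDensity (fun ω => ENNReal.ofReal (1 + ε * D ω)))
    (Ψu : Measure Ω → ℝ)
    (hΨu : ∀ ν : Measure Ω, Ψu ν =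
      (∫ ω, Y ω * (if v ≤ A ω then (1 : ℝ) else 0) ∂ν) / (ν {ω | v ≤ A ω}).toReal)
    (D₀ : Ω → ℝ)
    (hD₀ : D₀ = fun ω =>
      ((if v ≤ A ω then (1 : ℝ) else 0) / (μ {ω' | v ≤ A ω'}).toReal) *
        (Y ω - (∫ ω', Y ω' * (if v ≤ A ω' then (1 : ℝ) else 0) ∂μ) /
          (μ {ω' | v ≤ A ω'}).toReal)) :
    HasDerivAt (fun ε => Ψu (Pe ε)) (∫ ω, D ω * D₀ ω ∂μ) 0 :=
  stmt8_general μ A Y hAmeas hYmeas hY01 v hpos D hDmeas C hDbound Pe hPe Ψu hΨu D₀ hD₀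
end

section
/- Under the base setup with estimated nuisances ḡ, Ḡ, Q̄, Q̄ᵥ, the following exact second-order expansion holds: E[(1{A ≥ v}·Δ/(ḡ·Ḡ))·(Y − Q̄)] + E[(1{A ≥ v}/ḡ)·(Q̄ − Q̄ᵥ)] + Ψ̄ − Ψ₀ = R₂, where R₂ := E[(1{A ≥ v}/ḡ)·((G₀ − Ḡ)/Ḡ)·(Q₀ − Q̄)] + E[((g₀ − ḡ)/ḡ)·(Q₀ᵥ − Q̄ᵥ)]. -/
open MeasureTheory ProbabilityTheory

private lemma intg_bdd {Ω : Type*} {mΩ : MeasurableSpace Ω} {μ : Measure Ω} [IsFiniteMeasure μ]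
    {f : Ω → ℝ} (hf : AEStronglyMeasurable f μ) {C : ℝ} (h : ∀ᵐ ω ∂μ, |f ω| ≤ C) :
    Integrable f μ :=
  (integrable_const C).mono' hf h

private lemma pullout {Ω : Type*} {mΩ : MeasurableSpace Ω} {μ : Measure Ω}
    [IsProbabilityMeasure μ] {m : MeasurableSpace Ω}
    (hm : m ≤ mΩ) {c f : Ω → ℝ}
    (hc : StronglyMeasurable[m] c) (hcf : Integrable (fun ω => c ω * f ω) μ)
    (hf : Integrable f μ) :
    ∫ ω, c ω * f ω ∂μ = ∫ ω, c ω * (μ[f|m]) ω ∂μ := by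
  have h1 : μ[c * f|m] =ᵐ[μ] c * μ[f|m] :=
    condExp_mul_of_stronglyMeasurable_left hc hcf hf
  have h2 : ∫ ω, (μ[c * f|m]) ω ∂μ = ∫ ω, (c * f) ω ∂μ := integral_condExp hm
  calc ∫ ω, c ω * f ω ∂μ = ∫ ω, (μ[c * f|m]) ω ∂μ := h2.symm
    _ = ∫ ω, c ω * (μ[f|m]) ω ∂μ := integral_congr_ae h1

private lemma abs_mul_le' {a b c d : ℝ} (h1 : |a| ≤ c) (h2 : |b| ≤ d) : |a*b| ≤ c*d := by
  rw [abs_mul]; exact mul_le_mul h1 h2 (abs_nonneg _) ((abs_nonneg a).trans h1)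

private lemma abs_div_le' {a b c δ : ℝ} (h1 : |a| ≤ c) (h2 : 0 < δ) (h3 : δ ≤ b) :
    |a/b| ≤ c/δ := by
  rw [abs_div]
  exact div_le_div₀ ((abs_nonneg a).trans h1) h1 h2 (h3.trans (le_abs_self b))

private lemma abs_sub_le' {a b c d : ℝ} (h1 : |a| ≤ c) (h2 : |b| ≤ d) : |a - b| ≤ c + d := by
  have ha := abs_le.mp h1; have hb := abs_le.mp h2
  rw [abs_le]; constructor <;> [linarith; linarith]

/-- exact second-order (von Mises) expansion with double-robust remainder
`R₂` for estimated nuisances. -/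
theorem stmt9
    {Ω 𝒲 : Type*} [mΩ : MeasurableSpace Ω] [MeasurableSpace 𝒲]
    (μ : Measure Ω) [IsProbabilityMeasure μ]
    (W : Ω → 𝒲) (A Δ Y : Ω → ℝ)
    (hWmeas : Measurable W) (hAmeas : Measurable A)
    (hΔmeas : Measurable Δ) (hYmeas : Measurable Y)
    (hΔ01 : ∀ ω, Δ ω = 0 ∨ Δ ω = 1) (hY01 : ∀ ω, Y ω ∈ Set.Icc (0 : ℝ) 1)
    (v δ : ℝ) (hδ0 : 0 < δ) (hδ1 : δ < 1)
    (m0 m1 m2 : MeasurableSpace Ω)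
    (hm0 : m0 = MeasurableSpace.comap W inferInstance)
    (hm1 : m1 = MeasurableSpace.comap (fun ω => (A ω, W ω)) inferInstance)
    (hm2 : m2 = MeasurableSpace.comap (fun ω => (A ω, W ω, Δ ω)) inferInstance)
    (G₀ g₀ Q₀ Q₀ᵥ : Ω → ℝ) (Ψ₀ : ℝ)
    (hG₀ : G₀ = μ[Δ | m1])
    (hg₀ : g₀ = μ[fun ω => if v ≤ A ω then (1 : ℝ) else 0 | m0])
    (hQ₀ : Q₀ = fun ω => ((μ[fun ω' => Y ω' * Δ ω' | m1]) ω) / G₀ ω)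
    (hQ₀ᵥ : Q₀ᵥ = fun ω =>
      ((μ[fun ω' => Q₀ ω' * (if v ≤ A ω' then (1 : ℝ) else 0) | m0]) ω) / g₀ ω)
    (hΨ₀ : Ψ₀ = ∫ ω, Q₀ᵥ ω ∂μ)
    (hG₀pos : ∀ᵐ ω ∂μ, δ ≤ G₀ ω)
    (hg₀pos : ∀ᵐ ω ∂μ, δ ≤ g₀ ω)
    (Gbar gbar Qbar Qbarv : Ω → ℝ)
    (hGbarMeas : Measurable[m1] Gbar) (hgbarMeas : Measurable[m0] gbar)
    (hQbarMeas : Measurable[m1] Qbar) (hQbarvMeas : Measurable[m0] Qbarv)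
    (hGbarB : ∀ ω, Gbar ω ∈ Set.Icc δ 1) (hgbarB : ∀ ω, gbar ω ∈ Set.Icc δ 1)
    (hQbarB : ∀ ω, Qbar ω ∈ Set.Icc (0 : ℝ) 1) (hQbarvB : ∀ ω, Qbarv ω ∈ Set.Icc (0 : ℝ) 1)
    (Psibar : ℝ) (hPsibar : Psibar = ∫ ω, Qbarv ω ∂μ)
    (R₂ : ℝ)
    (hR₂ : R₂ = ∫ ω, ((if v ≤ A ω then (1 : ℝ) else 0) / gbar ω) *
        ((G₀ ω - Gbar ω) / Gbar ω) * (Q₀ ω - Qbar ω) ∂μ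
      + ∫ ω, ((g₀ ω - gbar ω) / gbar ω) * (Q₀ᵥ ω - Qbarv ω) ∂μ) :
    ∫ ω, ((if v ≤ A ω then (1 : ℝ) else 0) * Δ ω / (gbar ω * Gbar ω)) * (Y ω - Qbar ω) ∂μ
      + ∫ ω, ((if v ≤ A ω then (1 : ℝ) else 0) / gbar ω) * (Qbar ω - Qbarv ω) ∂μ
      + Psibar - Ψ₀ = R₂ := by
  -- σ-algebra inclusions
  have hm1le : m1 ≤ mΩ := by
    rw [hm1]; exact measurable_iff_comap_le.mp (hAmeas.prodMk hWmeas)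
  have hm0le : m0 ≤ mΩ := by
    rw [hm0]; exact measurable_iff_comap_le.mp hWmeas
  -- basic measurability
  have hpair : Measurable[m1] (fun ω => (A ω, W ω)) := by
    rw [hm1]; exact measurable_iff_comap_le.mpr le_rfl
  have hA1 : Measurable[m1] A := measurable_fst.comp hpair
  have hm01 : m0 ≤ m1 := by
    rw [hm0, hm1]
    intro s hs
    obtain ⟨t, ht, rfl⟩ := hs
    refine ⟨Set.univ ×ˢ t, MeasurableSet.univ.prod ht, ?_⟩
    ext ω; simp
  have hIm1 : Measurable[m1] (fun ω => if v ≤ A ω then (1 : ℝ) else 0) :=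
    Measurable.ite (measurableSet_le measurable_const hA1) measurable_const measurable_const
  have hImeas : Measurable[mΩ] (fun ω => if v ≤ A ω then (1 : ℝ) else 0) :=
    hIm1.mono hm1le le_rfl
  have hGbarm : Measurable[mΩ] Gbar := hGbarMeas.mono hm1le le_rfl
  have hgbarm : Measurable[mΩ] gbar := hgbarMeas.mono hm0le le_rfl
  have hQbarm : Measurable[mΩ] Qbar := hQbarMeas.mono hm1le le_rfl
  have hQbarvm : Measurable[mΩ] Qbarv := hQbarvMeas.mono hm0le le_rfl
  have hG₀sm : StronglyMeasurable[m1] G₀ := hG₀ ▸ stronglyMeasurable_condExp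
  have hG₀m : Measurable[mΩ] G₀ := hG₀sm.measurable.mono hm1le le_rfl
  have hN1m : Measurable[mΩ] (μ[fun ω' => Y ω' * Δ ω'|m1]) :=
    stronglyMeasurable_condExp.measurable.mono hm1le le_rfl
  have hQ₀m : Measurable[mΩ] Q₀ := by rw [hQ₀]; exact hN1m.div hG₀m
  have hg₀m : Measurable[mΩ] g₀ :=
    hg₀ ▸ (stronglyMeasurable_condExp.measurable.mono hm0le le_rfl)
  have hN0m : Measurable[mΩ]
      (μ[fun ω' => Q₀ ω' * (if v ≤ A ω' then (1 : ℝ) else 0)|m0]) :=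
    stronglyMeasurable_condExp.measurable.mono hm0le le_rfl
  have hQ₀ᵥm : Measurable[mΩ] Q₀ᵥ := by rw [hQ₀ᵥ]; exact hN0m.div hg₀m
  -- pointwise bounds
  have aΔ : ∀ ω, |Δ ω| ≤ 1 := fun ω => by rcases hΔ01 ω with h | h <;> simp [h]
  have aY : ∀ ω, |Y ω| ≤ 1 := fun ω => abs_le.mpr ⟨by linarith [(hY01 ω).1], (hY01 ω).2⟩
  have aQb : ∀ ω, |Qbar ω| ≤ 1 := fun ω => abs_le.mpr ⟨by linarith [(hQbarB ω).1], (hQbarB ω).2⟩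
  have aQbv : ∀ ω, |Qbarv ω| ≤ 1 :=
    fun ω => abs_le.mpr ⟨by linarith [(hQbarvB ω).1], (hQbarvB ω).2⟩
  have aI : ∀ ω, |if v ≤ A ω then (1 : ℝ) else 0| ≤ 1 := fun ω => by split <;> norm_num
  have agbar : ∀ ω, δ ≤ gbar ω := fun ω => (hgbarB ω).1
  have aGbar : ∀ ω, δ ≤ Gbar ω := fun ω => (hGbarB ω).1
  have agbar1 : ∀ ω, |gbar ω| ≤ 1 := fun ω => abs_le.mpr ⟨by linarith [(hgbarB ω).1], (hgbarB ω).2⟩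
  have aGbar1 : ∀ ω, |Gbar ω| ≤ 1 := fun ω => abs_le.mpr ⟨by linarith [(hGbarB ω).1], (hGbarB ω).2⟩
  have hgne : ∀ ω, gbar ω ≠ 0 := fun ω => ne_of_gt (lt_of_lt_of_le hδ0 (agbar ω))
  have hGne : ∀ ω, Gbar ω ≠ 0 := fun ω => ne_of_gt (lt_of_lt_of_le hδ0 (aGbar ω))
  -- simple integrabilities
  have iΔ : Integrable Δ μ := intg_bdd hΔmeas.aestronglyMeasurable (ae_of_all _ aΔ)
  have iI : Integrable (fun ω => if v ≤ A ω then (1 : ℝ) else 0) μ :=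
    intg_bdd hImeas.aestronglyMeasurable (ae_of_all _ aI)
  have iYΔ : Integrable (fun ω => Y ω * Δ ω) μ :=
    intg_bdd (hYmeas.mul hΔmeas).aestronglyMeasurable
      (ae_of_all _ fun ω => abs_mul_le' (aY ω) (aΔ ω))
  have iQbΔ : Integrable (fun ω => Qbar ω * Δ ω) μ :=
    intg_bdd (hQbarm.mul hΔmeas).aestronglyMeasurable
      (ae_of_all _ fun ω => abs_mul_le' (aQb ω) (aΔ ω))
  have if1 : Integrable (fun ω => Δ ω * (Y ω - Qbar ω)) μ :=
    intg_bdd (hΔmeas.mul (hYmeas.sub hQbarm)).aestronglyMeasurable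
      (ae_of_all _ fun ω => abs_mul_le' (aΔ ω) (abs_sub_le' (aY ω) (aQb ω)))
  -- a.e. bounds on conditional quantities
  have hΔ01' : ∀ ω, (0:ℝ) ≤ Δ ω ∧ Δ ω ≤ 1 := fun ω => by rcases hΔ01 ω with h | h <;> simp [h]
  have hG₀ub : ∀ᵐ ω ∂μ, G₀ ω ≤ 1 := by
    have h1 : μ[Δ|m1] ≤ᵐ[μ] μ[fun _ => (1:ℝ)|m1] :=
      condExp_mono iΔ (integrable_const 1) (ae_of_all _ fun ω => (hΔ01' ω).2)
    rw [condExp_const hm1le] at h1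
    rw [hG₀]; exact h1
  have hN1lb : ∀ᵐ ω ∂μ, 0 ≤ (μ[fun ω' => Y ω' * Δ ω'|m1]) ω :=
    condExp_nonneg (ae_of_all _ fun ω => mul_nonneg (hY01 ω).1 (hΔ01' ω).1)
  have hN1ub : ∀ᵐ ω ∂μ, (μ[fun ω' => Y ω' * Δ ω'|m1]) ω ≤ 1 := by
    have h1 : μ[fun ω' => Y ω' * Δ ω'|m1] ≤ᵐ[μ] μ[fun _ => (1:ℝ)|m1] :=
      condExp_mono iYΔ (integrable_const 1)
        (ae_of_all _ fun ω => mul_le_one₀ (hY01 ω).2 (hΔ01' ω).1 (hΔ01' ω).2)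
    rw [condExp_const hm1le] at h1
    exact h1
  have hQ₀b : ∀ᵐ ω ∂μ, 0 ≤ Q₀ ω ∧ Q₀ ω ≤ 1/δ := by
    filter_upwards [hG₀pos, hN1lb, hN1ub] with ω h1 h2 h3
    rw [hQ₀]
    constructor
    · exact div_nonneg h2 (le_of_lt (lt_of_lt_of_le hδ0 h1))
    · exact div_le_div₀ zero_le_one h3 hδ0 h1
  have hg₀ub : ∀ᵐ ω ∂μ, g₀ ω ≤ 1 := by
    have h1 : μ[fun ω => if v ≤ A ω then (1:ℝ) else 0|m0] ≤ᵐ[μ] μ[fun _ => (1:ℝ)|m0] :=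
      condExp_mono iI (integrable_const 1)
        (ae_of_all _ fun ω => by
          show (if v ≤ A ω then (1:ℝ) else 0) ≤ 1
          split <;> norm_num)
    rw [condExp_const hm0le] at h1
    rw [hg₀]; exact h1
  -- key conditional-expectation identities
  have kYΔ : ∀ᵐ ω ∂μ, (μ[fun ω' => Y ω' * Δ ω'|m1]) ω = Q₀ ω * G₀ ω := by
    filter_upwards [hG₀pos] with ω h
    have hne : G₀ ω ≠ 0 := ne_of_gt (lt_of_lt_of_le hδ0 h)
    rw [hQ₀]; field_simp
  -- Q₀ integrability pieces
  have iQ₀I : Integrable (fun ω => Q₀ ω * (if v ≤ A ω then (1 : ℝ) else 0)) μ := by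
    refine intg_bdd (hQ₀m.mul hImeas).aestronglyMeasurable (C := (1/δ) * 1) ?_
    filter_upwards [hQ₀b] with ω h
    exact abs_mul_le' (abs_le.mpr ⟨by linarith [h.1, one_div_pos.mpr hδ0], h.2⟩) (aI ω)
  have kQI : ∀ᵐ ω ∂μ,
      (μ[fun ω' => Q₀ ω' * (if v ≤ A ω' then (1 : ℝ) else 0)|m0]) ω = Q₀ᵥ ω * g₀ ω := by
    filter_upwards [hg₀pos] with ω h
    have hne : g₀ ω ≠ 0 := ne_of_gt (lt_of_lt_of_le hδ0 h)
    rw [hQ₀ᵥ]; field_simp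
  have hN0lb : ∀ᵐ ω ∂μ, 0 ≤ (μ[fun ω' => Q₀ ω' * (if v ≤ A ω' then (1 : ℝ) else 0)|m0]) ω := by
    refine condExp_nonneg ?_
    filter_upwards [hQ₀b] with ω h
    exact mul_nonneg h.1 (by split <;> norm_num)
  have hN0ub : ∀ᵐ ω ∂μ,
      (μ[fun ω' => Q₀ ω' * (if v ≤ A ω' then (1 : ℝ) else 0)|m0]) ω ≤ 1/δ := by
    have h1 : μ[fun ω' => Q₀ ω' * (if v ≤ A ω' then (1 : ℝ) else 0)|m0]
        ≤ᵐ[μ] μ[fun _ => 1/δ|m0] := by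
      refine condExp_mono iQ₀I (integrable_const _) ?_
      filter_upwards [hQ₀b] with ω h
      calc Q₀ ω * (if v ≤ A ω then (1:ℝ) else 0) ≤ Q₀ ω * 1 := by
            refine mul_le_mul_of_nonneg_left ?_ h.1
            split <;> norm_num
        _ ≤ 1/δ := by rw [mul_one]; exact h.2
    rw [condExp_const hm0le] at h1
    exact h1
  have hQ₀ᵥb : ∀ᵐ ω ∂μ, 0 ≤ Q₀ᵥ ω ∧ Q₀ᵥ ω ≤ (1/δ)/δ := by
    filter_upwards [hg₀pos, hN0lb, hN0ub] with ω h1 h2 h3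
    rw [hQ₀ᵥ]
    constructor
    · exact div_nonneg h2 (le_of_lt (lt_of_lt_of_le hδ0 h1))
    · exact div_le_div₀ (by positivity) h3 hδ0 h1
  -- remaining integrabilities
  have aQ₀ : ∀ᵐ ω ∂μ, |Q₀ ω| ≤ 1/δ := by
    filter_upwards [hQ₀b] with ω h
    exact abs_le.mpr ⟨by linarith [one_div_pos.mpr hδ0], h.2⟩
  have aQ₀ᵥ : ∀ᵐ ω ∂μ, |Q₀ᵥ ω| ≤ (1/δ)/δ := by
    filter_upwards [hQ₀ᵥb] with ω h
    have : (0:ℝ) < (1/δ)/δ := by positivity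
    exact abs_le.mpr ⟨by linarith, h.2⟩
  have aG₀ : ∀ᵐ ω ∂μ, |G₀ ω| ≤ 1 := by
    filter_upwards [hG₀pos, hG₀ub] with ω h1 h2
    exact abs_le.mpr ⟨by linarith, h2⟩
  have ag₀ : ∀ᵐ ω ∂μ, |g₀ ω| ≤ 1 := by
    filter_upwards [hg₀pos, hg₀ub] with ω h1 h2
    exact abs_le.mpr ⟨by linarith, h2⟩
  have icf1 : Integrable (fun ω =>
      ((if v ≤ A ω then (1 : ℝ) else 0) / (gbar ω * Gbar ω)) * (Δ ω * (Y ω - Qbar ω))) μ := by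
    refine intg_bdd (((hImeas.div (hgbarm.mul hGbarm))).mul
      (hΔmeas.mul (hYmeas.sub hQbarm))).aestronglyMeasurable (C := (1/(δ*δ)) * (1*(1+1))) ?_
    refine ae_of_all _ fun ω => ?_
    exact abs_mul_le' (abs_div_le' (aI ω) (by positivity)
        (mul_le_mul (agbar ω) (aGbar ω) (le_of_lt hδ0) (le_trans (le_of_lt hδ0) (agbar ω))))
      (abs_mul_le' (aΔ ω) (abs_sub_le' (aY ω) (aQb ω)))
  have iR2a : Integrable (fun ω => ((if v ≤ A ω then (1 : ℝ) else 0) / gbar ω) *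
      ((G₀ ω - Gbar ω) / Gbar ω) * (Q₀ ω - Qbar ω)) μ := by
    refine intg_bdd (((hImeas.div hgbarm).mul ((hG₀m.sub hGbarm).div hGbarm)).mul
      (hQ₀m.sub hQbarm)).aestronglyMeasurable (C := ((1/δ) * ((1+1)/δ)) * (1/δ + 1)) ?_
    filter_upwards [aG₀, aQ₀] with ω h1 h2
    exact abs_mul_le' (abs_mul_le' (abs_div_le' (aI ω) hδ0 (agbar ω))
        (abs_div_le' (abs_sub_le' h1 (aGbar1 ω)) hδ0 (aGbar ω)))
      (abs_sub_le' h2 (aQb ω))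
  have imid : Integrable (fun ω =>
      ((if v ≤ A ω then (1 : ℝ) else 0) / gbar ω) * (Q₀ ω - Qbar ω)) μ := by
    refine intg_bdd ((hImeas.div hgbarm).mul
      (hQ₀m.sub hQbarm)).aestronglyMeasurable (C := (1/δ) * (1/δ + 1)) ?_
    filter_upwards [aQ₀] with ω h2
    exact abs_mul_le' (abs_div_le' (aI ω) hδ0 (agbar ω)) (abs_sub_le' h2 (aQb ω))
  have imid2 : Integrable (fun ω =>
      ((if v ≤ A ω then (1 : ℝ) else 0) / gbar ω) * (Qbar ω - Qbarv ω)) μ := by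
    refine intg_bdd ((hImeas.div hgbarm).mul
      (hQbarm.sub hQbarvm)).aestronglyMeasurable (C := (1/δ) * (1 + 1)) ?_
    refine ae_of_all _ fun ω => ?_
    exact abs_mul_le' (abs_div_le' (aI ω) hδ0 (agbar ω)) (abs_sub_le' (aQb ω) (aQbv ω))
  have ic2 : Integrable (fun ω =>
      (1 / gbar ω) * (Q₀ ω * (if v ≤ A ω then (1 : ℝ) else 0))) μ := by
    refine intg_bdd ((measurable_const.div hgbarm).mul
      (hQ₀m.mul hImeas)).aestronglyMeasurable (C := (1/δ) * ((1/δ) * 1)) ?_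
    filter_upwards [aQ₀] with ω h
    exact abs_mul_le' (abs_div_le' (by norm_num) hδ0 (agbar ω)) (abs_mul_le' h (aI ω))
  have ic3 : Integrable (fun ω =>
      (Qbarv ω / gbar ω) * (if v ≤ A ω then (1 : ℝ) else 0)) μ := by
    refine intg_bdd ((hQbarvm.div hgbarm).mul hImeas).aestronglyMeasurable
      (C := (1/δ) * 1) ?_
    refine ae_of_all _ fun ω => ?_
    exact abs_mul_le' (abs_div_le' (aQbv ω) hδ0 (agbar ω)) (aI ω)
  have ia : Integrable (fun ω => (1 / gbar ω) * (Q₀ᵥ ω * g₀ ω)) μ := by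
    refine intg_bdd ((measurable_const.div hgbarm).mul
      (hQ₀ᵥm.mul hg₀m)).aestronglyMeasurable (C := (1/δ) * (((1/δ)/δ) * 1)) ?_
    filter_upwards [aQ₀ᵥ, ag₀] with ω h1 h2
    exact abs_mul_le' (abs_div_le' (by norm_num) hδ0 (agbar ω)) (abs_mul_le' h1 h2)
  have ib : Integrable (fun ω => (Qbarv ω / gbar ω) * g₀ ω) μ := by
    refine intg_bdd ((hQbarvm.div hgbarm).mul hg₀m).aestronglyMeasurable
      (C := (1/δ) * 1) ?_
    filter_upwards [ag₀] with ω h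
    exact abs_mul_le' (abs_div_le' (aQbv ω) hδ0 (agbar ω)) h
  have iR2b : Integrable (fun ω => ((g₀ ω - gbar ω) / gbar ω) * (Q₀ᵥ ω - Qbarv ω)) μ := by
    refine intg_bdd (((hg₀m.sub hgbarm).div hgbarm).mul
      (hQ₀ᵥm.sub hQbarvm)).aestronglyMeasurable (C := ((1+1)/δ) * ((1/δ)/δ + 1)) ?_
    filter_upwards [ag₀, aQ₀ᵥ] with ω h1 h2
    exact abs_mul_le' (abs_div_le' (abs_sub_le' h1 (agbar1 ω)) hδ0 (agbar ω))
      (abs_sub_le' h2 (aQbv ω))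
  have iQ₀ᵥ : Integrable Q₀ᵥ μ := intg_bdd hQ₀ᵥm.aestronglyMeasurable aQ₀ᵥ
  have iQbv : Integrable Qbarv μ := intg_bdd hQbarvm.aestronglyMeasurable (ae_of_all _ aQbv)
  -- Step 1: the first integral equals R2a + M
  have key1 : μ[(fun ω => Δ ω * (Y ω - Qbar ω))|m1]
      =ᵐ[μ] fun ω => G₀ ω * (Q₀ ω - Qbar ω) := by
    have e1 : (fun ω => Δ ω * (Y ω - Qbar ω))
        = (fun ω' => Y ω' * Δ ω') - (fun ω' => Qbar ω' * Δ ω') := by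
      funext ω; show Δ ω * (Y ω - Qbar ω) = Y ω * Δ ω - Qbar ω * Δ ω; ring
    rw [e1]
    have h2 := condExp_sub (μ := μ) (m := m1) iYΔ iQbΔ
    have h3 : μ[(fun ω' => Qbar ω' * Δ ω')|m1] =ᵐ[μ] Qbar * μ[Δ|m1] :=
      condExp_mul_of_stronglyMeasurable_left hQbarMeas.stronglyMeasurable iQbΔ iΔ
    filter_upwards [h2, h3, kYΔ] with ω e2 e3 e4
    rw [e2]
    simp only [Pi.sub_apply, Pi.mul_apply] at *
    rw [e3, e4, ← hG₀]
    ring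
  have step1 : ∫ ω, ((if v ≤ A ω then (1 : ℝ) else 0) * Δ ω / (gbar ω * Gbar ω)) *
        (Y ω - Qbar ω) ∂μ
      = (∫ ω, ((if v ≤ A ω then (1 : ℝ) else 0) / gbar ω) *
          ((G₀ ω - Gbar ω) / Gbar ω) * (Q₀ ω - Qbar ω) ∂μ)
        + ∫ ω, ((if v ≤ A ω then (1 : ℝ) else 0) / gbar ω) * (Q₀ ω - Qbar ω) ∂μ := by
    have e0 : ∫ ω, ((if v ≤ A ω then (1 : ℝ) else 0) * Δ ω / (gbar ω * Gbar ω)) *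
        (Y ω - Qbar ω) ∂μ
        = ∫ ω, ((if v ≤ A ω then (1 : ℝ) else 0) / (gbar ω * Gbar ω)) *
          (Δ ω * (Y ω - Qbar ω)) ∂μ :=
      integral_congr_ae (ae_of_all _ fun ω => by ring)
    have hc1 : StronglyMeasurable[m1] (fun ω =>
        (if v ≤ A ω then (1 : ℝ) else 0) / (gbar ω * Gbar ω)) :=
      (hIm1.div ((hgbarMeas.mono hm01 le_rfl).mul hGbarMeas)).stronglyMeasurable
    have e1 := pullout (μ := μ) hm1le hc1 icf1 if1
    have e2 : ∫ ω, ((if v ≤ A ω then (1 : ℝ) else 0) / (gbar ω * Gbar ω)) *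
          (μ[(fun ω => Δ ω * (Y ω - Qbar ω))|m1]) ω ∂μ
        = ∫ ω, (((if v ≤ A ω then (1 : ℝ) else 0) / gbar ω) *
            ((G₀ ω - Gbar ω) / Gbar ω) * (Q₀ ω - Qbar ω)
          + ((if v ≤ A ω then (1 : ℝ) else 0) / gbar ω) * (Q₀ ω - Qbar ω)) ∂μ := by
      refine integral_congr_ae ?_
      filter_upwards [key1] with ω hk
      rw [hk]
      have h1 := hgne ω; have h2 := hGne ω
      split_ifs with hsplit
      · field_simp
        ring
      · simp
    rw [e0, e1, e2, integral_add iR2a imid]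
  -- Step 2
  have kg₀ : ∀ᵐ ω ∂μ, (μ[fun ω => if v ≤ A ω then (1 : ℝ) else 0|m0]) ω = g₀ ω :=
    ae_of_all _ fun ω => by rw [hg₀]
  have step2 : (∫ ω, ((if v ≤ A ω then (1 : ℝ) else 0) / gbar ω) * (Q₀ ω - Qbar ω) ∂μ)
      + ∫ ω, ((if v ≤ A ω then (1 : ℝ) else 0) / gbar ω) * (Qbar ω - Qbarv ω) ∂μ
      = ∫ ω, (g₀ ω / gbar ω) * (Q₀ᵥ ω - Qbarv ω) ∂μ := by
    rw [← integral_add imid imid2]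
    have e0 : ∫ ω, (((if v ≤ A ω then (1 : ℝ) else 0) / gbar ω) * (Q₀ ω - Qbar ω)
          + ((if v ≤ A ω then (1 : ℝ) else 0) / gbar ω) * (Qbar ω - Qbarv ω)) ∂μ
        = ∫ ω, ((1 / gbar ω) * (Q₀ ω * (if v ≤ A ω then (1 : ℝ) else 0))
          - (Qbarv ω / gbar ω) * (if v ≤ A ω then (1 : ℝ) else 0)) ∂μ :=
      integral_congr_ae (ae_of_all _ fun ω => by ring)
    have hc2 : StronglyMeasurable[m0] (fun ω => 1 / gbar ω) :=
      (measurable_const.div hgbarMeas).stronglyMeasurable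
    have hc3 : StronglyMeasurable[m0] (fun ω => Qbarv ω / gbar ω) :=
      (hQbarvMeas.div hgbarMeas).stronglyMeasurable
    have ea := pullout (μ := μ) hm0le hc2 ic2 iQ₀I
    have eb := pullout (μ := μ) hm0le hc3 ic3 iI
    have ea2 : ∫ ω, (1 / gbar ω) *
          (μ[(fun ω' => Q₀ ω' * (if v ≤ A ω' then (1 : ℝ) else 0))|m0]) ω ∂μ
        = ∫ ω, (1 / gbar ω) * (Q₀ᵥ ω * g₀ ω) ∂μ := by
      refine integral_congr_ae ?_
      filter_upwards [kQI] with ω hk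
      rw [hk]
    have eb2 : ∫ ω, (Qbarv ω / gbar ω) *
          (μ[(fun ω => if v ≤ A ω then (1 : ℝ) else 0)|m0]) ω ∂μ
        = ∫ ω, (Qbarv ω / gbar ω) * g₀ ω ∂μ := by
      refine integral_congr_ae ?_
      filter_upwards [kg₀] with ω hk
      rw [hk]
    have efin : ∫ ω, ((1 / gbar ω) * (Q₀ᵥ ω * g₀ ω) - (Qbarv ω / gbar ω) * g₀ ω) ∂μ
        = ∫ ω, (g₀ ω / gbar ω) * (Q₀ᵥ ω - Qbarv ω) ∂μ :=
      integral_congr_ae (ae_of_all _ fun ω => by ring)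
    rw [e0, integral_sub ic2 ic3, ea, eb, ea2, eb2, ← integral_sub ia ib, efin]
  -- Step 3
  have step3 : ∫ ω, (g₀ ω / gbar ω) * (Q₀ᵥ ω - Qbarv ω) ∂μ
      = (∫ ω, ((g₀ ω - gbar ω) / gbar ω) * (Q₀ᵥ ω - Qbarv ω) ∂μ) + (Ψ₀ - Psibar) := by
    have e0 : ∫ ω, (g₀ ω / gbar ω) * (Q₀ᵥ ω - Qbarv ω) ∂μ
        = ∫ ω, (((g₀ ω - gbar ω) / gbar ω) * (Q₀ᵥ ω - Qbarv ω)
            + (Q₀ᵥ ω - Qbarv ω)) ∂μ := by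
      refine integral_congr_ae (ae_of_all _ fun ω => ?_)
      have h1 := hgne ω
      field_simp
      ring
    rw [e0, integral_add iR2b (show Integrable (fun ω => Q₀ᵥ ω - Qbarv ω) μ from iQ₀ᵥ.sub iQbv),
      integral_sub iQ₀ᵥ iQbv, hΨ₀, hPsibar]
  rw [hR₂]
  linarith [step1, step2, step3]
end

section
/- Under the base setup with estimated nuisances, if ḡ = g₀ a.s. and Ḡ = G₀ a.s., then for every choice of Q̄ and Q̄ᵥ one has Ψ̄ + E[(1{A ≥ v}·Δ/(ḡ·Ḡ))·(Y − Q̄)] + E[(1{A ≥ v}/ḡ)·(Q̄ − Q̄ᵥ)] = Ψ₀; i.e., the one-step/targeted population value recovers the true threshold-response when the propensity-type nuisances are correctly specified (double robustness, first case of Theorem 2). -/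
/-!
Everything rests on the pull-out property of conditional expectation: for a bounded
`m`-measurable weight `w`, `E[w X] = E[w E[X | m]]`, so dividing by a weight that agrees a.s.
with `E[X | m]` cancels against `X`. With `Ḡ = E[Δ | A, W]` and `ḡ = E[1{A ≥ v} | W]`, the
`Q̄`-part of the first correction becomes `-E[1{A ≥ v} Q̄ / ḡ]` and the `Q̄ᵥ`-part of the second
becomes `-Ψ̄`, so everything cancels except the `Y`-part, which equals
`E[Q₀ 1{A ≥ v} / ḡ] = E[Q₀ᵥ] = Ψ₀` after conditioning first on `(A, W)` and then on `W`.
-/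

open MeasureTheory ProbabilityTheory

section Reweighting

variable {Ω : Type*} {m mΩ : MeasurableSpace Ω} {μ : Measure Ω}
  {f g h e e' X : Ω → ℝ} {c C δ : ℝ}

theorem abs_div_le_div_of_le {x y : ℝ} (hδ : 0 < δ) (hx : |x| ≤ C) (hy : δ ≤ y) :
    |x / y| ≤ C / δ := by
  rw [abs_div, abs_of_pos (hδ.trans_le hy)]
  exact div_le_div₀ ((abs_nonneg x).trans hx) hx hδ hy

theorem integral_mul_condExp_of_bound [IsFiniteMeasure μ] (hm : m ≤ mΩ)
    (hf : StronglyMeasurable[m] f) (hf_bound : ∀ ω, ‖f ω‖ ≤ c) (hg : Integrable g μ) :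
    ∫ ω, f ω * g ω ∂μ = ∫ ω, f ω * μ[g|m] ω ∂μ :=
  calc ∫ ω, f ω * g ω ∂μ = ∫ ω, μ[f * g|m] ω ∂μ := (integral_condExp hm).symm
    _ = ∫ ω, f ω * μ[g|m] ω ∂μ :=
      integral_congr_ae (condExp_stronglyMeasurable_mul_of_bound hm hf hg c (ae_of_all μ hf_bound))

theorem integrable_div_mul (hm : m ≤ mΩ) (hδ : 0 < δ) (hh : Measurable[m] h)
    (hh_bound : ∀ ω, |h ω| ≤ C) (he : Measurable[m] e) (he_ge : ∀ ω, δ ≤ e ω)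
    (hX : Integrable X μ) :
    Integrable (fun ω => h ω / e ω * X ω) μ :=
  hX.bdd_mul (c := C / δ) ((hh.div he).mono hm le_rfl).aestronglyMeasurable
    (ae_of_all μ fun ω => abs_div_le_div_of_le hδ (hh_bound ω) (he_ge ω))

theorem integral_div_mul_eq_integral_mul_condExp_div [IsFiniteMeasure μ] (hm : m ≤ mΩ)
    (hδ : 0 < δ) (hh : Measurable[m] h) (hh_bound : ∀ ω, |h ω| ≤ C) (he : Measurable[m] e)
    (he_ge : ∀ ω, δ ≤ e ω) (hee' : e =ᵐ[μ] e') (hX : Integrable X μ) :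
    ∫ ω, h ω / e ω * X ω ∂μ = ∫ ω, h ω * (μ[X|m] ω / e' ω) ∂μ := by
  rw [integral_mul_condExp_of_bound (f := fun ω => h ω / e ω) hm (hh.div he).stronglyMeasurable
    (fun ω => abs_div_le_div_of_le hδ (hh_bound ω) (he_ge ω)) hX]
  refine integral_congr_ae ?_
  filter_upwards [hee'] with ω hω
  rw [hω]
  ring

theorem integral_div_mul_of_ae_eq_condExp [IsFiniteMeasure μ] (hm : m ≤ mΩ) (hδ : 0 < δ)
    (hh : Measurable[m] h) (hh_bound : ∀ ω, |h ω| ≤ C) (he : Measurable[m] e)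
    (he_ge : ∀ ω, δ ≤ e ω) (he_eq : e =ᵐ[μ] μ[X|m]) (hX : Integrable X μ) :
    ∫ ω, h ω / e ω * X ω ∂μ = ∫ ω, h ω ∂μ := by
  rw [integral_div_mul_eq_integral_mul_condExp_div hm hδ hh hh_bound he he_ge he_eq hX]
  refine integral_congr_ae ?_
  filter_upwards [he_eq] with ω hω
  rw [← hω, div_self (hδ.trans_le (he_ge ω)).ne', mul_one]

end Reweighting

section OneStep

variable {Ω : Type*} {m₀ m₁ mΩ : MeasurableSpace Ω} {μ : Measure Ω} [IsFiniteMeasure μ]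
  {I Δ Y X gbar Gbar g₀ G₀ Qbar Qbarv : Ω → ℝ} {δ C C' : ℝ}

theorem integral_div_div_mul_eq_integral_iterated_condExp (hm₀₁ : m₀ ≤ m₁) (hm₁ : m₁ ≤ mΩ)
    (hδ : 0 < δ) (hI : Measurable[m₁] I) (hI_bound : ∀ ω, |I ω| ≤ C)
    (hgbar : Measurable[m₀] gbar) (hgbar_ge : ∀ ω, δ ≤ gbar ω) (hgbar_eq : gbar =ᵐ[μ] g₀)
    (hGbar : Measurable[m₁] Gbar) (hGbar_ge : ∀ ω, δ ≤ Gbar ω) (hGbar_eq : Gbar =ᵐ[μ] G₀)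
    (hX : Integrable X μ) :
    ∫ ω, I ω / gbar ω / Gbar ω * X ω ∂μ
      = ∫ ω, μ[fun ω => μ[X|m₁] ω / G₀ ω * I ω|m₀] ω / g₀ ω ∂μ := by
  have hQI : Integrable (fun ω => μ[X|m₁] ω / G₀ ω * I ω) μ := by
    refine (integrable_div_mul hm₁ hδ hI hI_bound hGbar hGbar_ge
      (integrable_condExp (m := m₁) (f := X))).congr ?_
    filter_upwards [hGbar_eq] with ω hω
    rw [hω]
    ring
  calc ∫ ω, I ω / gbar ω / Gbar ω * X ω ∂μ
      = ∫ ω, I ω / gbar ω * (μ[X|m₁] ω / G₀ ω) ∂μ :=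
        integral_div_mul_eq_integral_mul_condExp_div (h := fun ω => I ω / gbar ω) hm₁ hδ
          (hI.div (hgbar.mono hm₀₁ le_rfl))
          (fun ω => abs_div_le_div_of_le hδ (hI_bound ω) (hgbar_ge ω)) hGbar hGbar_ge hGbar_eq hX
    _ = ∫ ω, 1 / gbar ω * (μ[X|m₁] ω / G₀ ω * I ω) ∂μ :=
        integral_congr_ae (ae_of_all μ fun ω => by ring)
    _ = ∫ ω, 1 * (μ[fun ω => μ[X|m₁] ω / G₀ ω * I ω|m₀] ω / g₀ ω) ∂μ :=
        integral_div_mul_eq_integral_mul_condExp_div (h := fun _ => 1) (hm₀₁.trans hm₁) hδ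
          measurable_const (fun _ => abs_one.le) hgbar hgbar_ge hgbar_eq hQI
    _ = ∫ ω, μ[fun ω => μ[X|m₁] ω / G₀ ω * I ω|m₀] ω / g₀ ω ∂μ := by simp only [one_mul]

theorem integral_outcome_residual_eq_of_ae_eq_condExp (hm₁ : m₁ ≤ mΩ) (hδ : 0 < δ)
    (hI : Measurable[m₁] I) (hI_bound : ∀ ω, |I ω| ≤ 1)
    (hΔ : Integrable Δ μ) (hYΔ : Integrable (fun ω => Y ω * Δ ω) μ)
    (hgbar : Measurable[m₁] gbar) (hgbar_ge : ∀ ω, δ ≤ gbar ω)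
    (hGbar : Measurable[m₁] Gbar) (hGbar_ge : ∀ ω, δ ≤ Gbar ω) (hGbar_eq : Gbar =ᵐ[μ] μ[Δ|m₁])
    (hQbar : Measurable[m₁] Qbar) (hQbar_bound : ∀ ω, |Qbar ω| ≤ C) :
    ∫ ω, (I ω * Δ ω / (gbar ω * Gbar ω)) * (Y ω - Qbar ω) ∂μ
      = ∫ ω, I ω / gbar ω / Gbar ω * (Y ω * Δ ω) ∂μ - ∫ ω, I ω * Qbar ω / gbar ω ∂μ := by
  have hI_div : ∀ ω, |I ω / gbar ω| ≤ 1 / δ := fun ω =>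
    abs_div_le_div_of_le hδ (hI_bound ω) (hgbar_ge ω)
  have hIQbar_div : ∀ ω, |I ω * Qbar ω / gbar ω| ≤ C / δ := fun ω => by
    refine abs_div_le_div_of_le hδ ?_ (hgbar_ge ω)
    rw [abs_mul]
    exact (mul_le_of_le_one_left (abs_nonneg _) (hI_bound ω)).trans (hQbar_bound ω)
  rw [← integral_div_mul_of_ae_eq_condExp (h := fun ω => I ω * Qbar ω / gbar ω) hm₁ hδ
    ((hI.mul hQbar).div hgbar) hIQbar_div hGbar hGbar_ge hGbar_eq hΔ, ← integral_sub
    (integrable_div_mul (h := fun ω => I ω / gbar ω) hm₁ hδ (hI.div hgbar) hI_div hGbar hGbar_ge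
      hYΔ)
    (integrable_div_mul (h := fun ω => I ω * Qbar ω / gbar ω) hm₁ hδ ((hI.mul hQbar).div hgbar)
      hIQbar_div hGbar hGbar_ge hΔ)]
  exact integral_congr_ae (ae_of_all μ fun ω => by ring)

theorem integral_weight_residual_eq_of_ae_eq_condExp (hm₀ : m₀ ≤ mΩ) (hδ : 0 < δ)
    (hI : Measurable I) (hI_bound : ∀ ω, |I ω| ≤ 1)
    (hgbar : Measurable[m₀] gbar) (hgbar_ge : ∀ ω, δ ≤ gbar ω) (hgbar_eq : gbar =ᵐ[μ] μ[I|m₀])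
    (hQbar : Measurable Qbar) (hQbar_bound : ∀ ω, |Qbar ω| ≤ C)
    (hQbarv : Measurable[m₀] Qbarv) (hQbarv_bound : ∀ ω, |Qbarv ω| ≤ C') :
    ∫ ω, (I ω / gbar ω) * (Qbar ω - Qbarv ω) ∂μ
      = ∫ ω, I ω * Qbar ω / gbar ω ∂μ - ∫ ω, Qbarv ω ∂μ := by
  have hI_int : Integrable I μ :=
    (integrable_const (1 : ℝ)).mono' hI.aestronglyMeasurable (ae_of_all μ hI_bound)
  have hQbar_int : Integrable Qbar μ :=
    (integrable_const C).mono' hQbar.aestronglyMeasurable (ae_of_all μ hQbar_bound)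
  have hIQbar_int : Integrable (fun ω => I ω * Qbar ω / gbar ω) μ :=
    (integrable_div_mul le_rfl hδ hI hI_bound (hgbar.mono hm₀ le_rfl) hgbar_ge hQbar_int).congr
      (ae_of_all μ fun ω => by ring)
  rw [← integral_div_mul_of_ae_eq_condExp hm₀ hδ hQbarv hQbarv_bound hgbar hgbar_ge hgbar_eq
    hI_int, ← integral_sub hIQbar_int
    (integrable_div_mul hm₀ hδ hQbarv hQbarv_bound hgbar hgbar_ge hI_int)]
  exact integral_congr_ae (ae_of_all μ fun ω => by ring)

theorem one_step_value_eq_of_propensities_ae_eq_condExp (hm₀₁ : m₀ ≤ m₁) (hm₁ : m₁ ≤ mΩ)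
    (hδ : 0 < δ) (hI : Measurable[m₁] I) (hI_bound : ∀ ω, |I ω| ≤ 1)
    (hΔ : Integrable Δ μ) (hYΔ : Integrable (fun ω => Y ω * Δ ω) μ)
    (hgbar : Measurable[m₀] gbar) (hgbar_ge : ∀ ω, δ ≤ gbar ω) (hgbar_eq : gbar =ᵐ[μ] μ[I|m₀])
    (hGbar : Measurable[m₁] Gbar) (hGbar_ge : ∀ ω, δ ≤ Gbar ω) (hGbar_eq : Gbar =ᵐ[μ] μ[Δ|m₁])
    (hQbar : Measurable[m₁] Qbar) (hQbar_bound : ∀ ω, |Qbar ω| ≤ C)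
    (hQbarv : Measurable[m₀] Qbarv) (hQbarv_bound : ∀ ω, |Qbarv ω| ≤ C') :
    ∫ ω, Qbarv ω ∂μ
      + ∫ ω, (I ω * Δ ω / (gbar ω * Gbar ω)) * (Y ω - Qbar ω) ∂μ
      + ∫ ω, (I ω / gbar ω) * (Qbar ω - Qbarv ω) ∂μ
      = ∫ ω, μ[fun ω => μ[fun ω => Y ω * Δ ω|m₁] ω / μ[Δ|m₁] ω * I ω|m₀] ω / μ[I|m₀] ω ∂μ := by
  rw [integral_outcome_residual_eq_of_ae_eq_condExp hm₁ hδ hI hI_bound hΔ hYΔ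
      (hgbar.mono hm₀₁ le_rfl) hgbar_ge hGbar hGbar_ge hGbar_eq hQbar hQbar_bound,
    integral_weight_residual_eq_of_ae_eq_condExp (hm₀₁.trans hm₁) hδ (hI.mono hm₁ le_rfl)
      hI_bound hgbar hgbar_ge hgbar_eq (hQbar.mono hm₁ le_rfl) hQbar_bound hQbarv hQbarv_bound,
    integral_div_div_mul_eq_integral_iterated_condExp hm₀₁ hm₁ hδ hI hI_bound hgbar hgbar_ge
      hgbar_eq hGbar hGbar_ge hGbar_eq hYΔ]
  ring

end OneStep

theorem abs_le_one_of_mem_Icc {x : ℝ} (hx : x ∈ Set.Icc (0 : ℝ) 1) : |x| ≤ 1 :=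
  (abs_of_nonneg hx.1).trans_le hx.2

theorem stmt10_general
    {Ω 𝒲 : Type*} [mΩ : MeasurableSpace Ω] [MeasurableSpace 𝒲]
    (μ : Measure Ω) [IsProbabilityMeasure μ]
    (W : Ω → 𝒲) (A Δ Y : Ω → ℝ)
    (hWmeas : Measurable W) (hAmeas : Measurable A)
    (hΔmeas : Measurable Δ) (hYmeas : Measurable Y)
    (hΔ01 : ∀ ω, Δ ω = 0 ∨ Δ ω = 1) (hY01 : ∀ ω, Y ω ∈ Set.Icc (0 : ℝ) 1)
    (v δ : ℝ) (hδ0 : 0 < δ)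
    (m0 m1 : MeasurableSpace Ω)
    (hm0 : m0 = MeasurableSpace.comap W inferInstance)
    (hm1 : m1 = MeasurableSpace.comap (fun ω => (A ω, W ω)) inferInstance)
    (G₀ g₀ Q₀ Q₀ᵥ : Ω → ℝ) (Ψ₀ : ℝ)
    (hG₀ : G₀ = μ[Δ | m1])
    (hg₀ : g₀ = μ[fun ω => if v ≤ A ω then (1 : ℝ) else 0 | m0])
    (hQ₀ : Q₀ = fun ω => ((μ[fun ω' => Y ω' * Δ ω' | m1]) ω) / G₀ ω)
    (hQ₀ᵥ : Q₀ᵥ = fun ω =>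
      ((μ[fun ω' => Q₀ ω' * (if v ≤ A ω' then (1 : ℝ) else 0) | m0]) ω) / g₀ ω)
    (hΨ₀ : Ψ₀ = ∫ ω, Q₀ᵥ ω ∂μ)
    (Gbar gbar Qbar Qbarv : Ω → ℝ)
    (hGbarMeas : Measurable[m1] Gbar) (hgbarMeas : Measurable[m0] gbar)
    (hQbarMeas : Measurable[m1] Qbar) (hQbarvMeas : Measurable[m0] Qbarv)
    (hGbarB : ∀ ω, Gbar ω ∈ Set.Icc δ 1) (hgbarB : ∀ ω, gbar ω ∈ Set.Icc δ 1)
    (hQbarB : ∀ ω, Qbar ω ∈ Set.Icc (0 : ℝ) 1) (hQbarvB : ∀ ω, Qbarv ω ∈ Set.Icc (0 : ℝ) 1)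
    (Psibar : ℝ) (hPsibar : Psibar = ∫ ω, Qbarv ω ∂μ)
    (hgbarEq : gbar =ᵐ[μ] g₀) (hGbarEq : Gbar =ᵐ[μ] G₀) :
    Psibar
      + ∫ ω, ((if v ≤ A ω then (1 : ℝ) else 0) * Δ ω / (gbar ω * Gbar ω)) * (Y ω - Qbar ω) ∂μ
      + ∫ ω, ((if v ≤ A ω then (1 : ℝ) else 0) / gbar ω) * (Qbar ω - Qbarv ω) ∂μ
      = Ψ₀ := by
  subst hΨ₀ hQ₀ᵥ hQ₀ hG₀ hg₀ hPsibar
  have hAW : Measurable[m1] fun ω => (A ω, W ω) := hm1 ▸ comap_measurable _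
  have hΔ01' : ∀ ω, Δ ω ∈ Set.Icc (0 : ℝ) 1 := fun ω => by
    rcases hΔ01 ω with h | h <;> simp [h]
  exact one_step_value_eq_of_propensities_ae_eq_condExp
    (hm0 ▸ (measurable_snd.comp hAW).comap_le) (hm1 ▸ (hAmeas.prodMk hWmeas).comap_le) hδ0
    (Measurable.ite (measurableSet_le measurable_const (measurable_fst.comp hAW))
      measurable_const measurable_const)
    (fun ω => by split_ifs <;> norm_num)
    (.of_mem_Icc 0 1 hΔmeas.aemeasurable (ae_of_all μ hΔ01'))
    (.of_mem_Icc 0 1 (hYmeas.mul hΔmeas).aemeasurable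
      (ae_of_all μ fun ω => unitInterval.mul_mem (hY01 ω) (hΔ01' ω)))
    hgbarMeas (fun ω => (hgbarB ω).1) hgbarEq hGbarMeas (fun ω => (hGbarB ω).1) hGbarEq
    hQbarMeas (fun ω => abs_le_one_of_mem_Icc (hQbarB ω))
    hQbarvMeas (fun ω => abs_le_one_of_mem_Icc (hQbarvB ω))

/-- double robustness, first case: if `ḡ = g₀` a.s. and `Ḡ = G₀` a.s.,
then the one-step/targeted population value recovers `Ψ₀` for every `Q̄`, `Q̄ᵥ`. -/
theorem stmt10
    {Ω 𝒲 : Type*} [mΩ : MeasurableSpace Ω] [MeasurableSpace 𝒲]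
    (μ : Measure Ω) [IsProbabilityMeasure μ]
    (W : Ω → 𝒲) (A Δ Y : Ω → ℝ)
    (hWmeas : Measurable W) (hAmeas : Measurable A)
    (hΔmeas : Measurable Δ) (hYmeas : Measurable Y)
    (hΔ01 : ∀ ω, Δ ω = 0 ∨ Δ ω = 1) (hY01 : ∀ ω, Y ω ∈ Set.Icc (0 : ℝ) 1)
    (v δ : ℝ) (hδ0 : 0 < δ) (hδ1 : δ < 1)
    (m0 m1 m2 : MeasurableSpace Ω)
    (hm0 : m0 = MeasurableSpace.comap W inferInstance)
    (hm1 : m1 = MeasurableSpace.comap (fun ω => (A ω, W ω)) inferInstance)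
    (hm2 : m2 = MeasurableSpace.comap (fun ω => (A ω, W ω, Δ ω)) inferInstance)
    (G₀ g₀ Q₀ Q₀ᵥ : Ω → ℝ) (Ψ₀ : ℝ)
    (hG₀ : G₀ = μ[Δ | m1])
    (hg₀ : g₀ = μ[fun ω => if v ≤ A ω then (1 : ℝ) else 0 | m0])
    (hQ₀ : Q₀ = fun ω => ((μ[fun ω' => Y ω' * Δ ω' | m1]) ω) / G₀ ω)
    (hQ₀ᵥ : Q₀ᵥ = fun ω =>
      ((μ[fun ω' => Q₀ ω' * (if v ≤ A ω' then (1 : ℝ) else 0) | m0]) ω) / g₀ ω)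
    (hΨ₀ : Ψ₀ = ∫ ω, Q₀ᵥ ω ∂μ)
    (hG₀pos : ∀ᵐ ω ∂μ, δ ≤ G₀ ω)
    (hg₀pos : ∀ᵐ ω ∂μ, δ ≤ g₀ ω)
    (Gbar gbar Qbar Qbarv : Ω → ℝ)
    (hGbarMeas : Measurable[m1] Gbar) (hgbarMeas : Measurable[m0] gbar)
    (hQbarMeas : Measurable[m1] Qbar) (hQbarvMeas : Measurable[m0] Qbarv)
    (hGbarB : ∀ ω, Gbar ω ∈ Set.Icc δ 1) (hgbarB : ∀ ω, gbar ω ∈ Set.Icc δ 1)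
    (hQbarB : ∀ ω, Qbar ω ∈ Set.Icc (0 : ℝ) 1) (hQbarvB : ∀ ω, Qbarv ω ∈ Set.Icc (0 : ℝ) 1)
    (Psibar : ℝ) (hPsibar : Psibar = ∫ ω, Qbarv ω ∂μ)
    (hgbarEq : gbar =ᵐ[μ] g₀) (hGbarEq : Gbar =ᵐ[μ] G₀) :
    Psibar
      + ∫ ω, ((if v ≤ A ω then (1 : ℝ) else 0) * Δ ω / (gbar ω * Gbar ω)) * (Y ω - Qbar ω) ∂μ
      + ∫ ω, ((if v ≤ A ω then (1 : ℝ) else 0) / gbar ω) * (Qbar ω - Qbarv ω) ∂μ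
      = Ψ₀ :=
  stmt10_general (mΩ := mΩ) μ W A Δ Y hWmeas hAmeas hΔmeas hYmeas hΔ01 hY01 v δ hδ0 m0 m1 hm0 hm1 G₀
    g₀ Q₀ Q₀ᵥ Ψ₀ hG₀ hg₀ hQ₀ hQ₀ᵥ hΨ₀ Gbar gbar Qbar Qbarv hGbarMeas hgbarMeas hQbarMeas hQbarvMeas
    hGbarB hgbarB hQbarB hQbarvB Psibar hPsibar hgbarEq hGbarEq
end

section
/- Under the base setup with estimated nuisances, if Q̄ = Q₀ a.s. and Q̄ᵥ = Q₀ᵥ a.s., then for every choice of 𝒢₀-measurable ḡ with δ ≤ ḡ ≤ 1 and 𝒢₁-measurable Ḡ with δ ≤ Ḡ ≤ 1, one has Ψ̄ + E[(1{A ≥ v}·Δ/(ḡ·Ḡ))·(Y − Q̄)] + E[(1{A ≥ v}/ḡ)·(Q̄ − Q̄ᵥ)] = Ψ₀; i.e., the true threshold-response is recovered when the outcome-regression nuisances are correctly specified (double robustness, second case of Theorem 2). -/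
/-!
Once `Q̄ = Q₀` a.s., the residual `Δ (Y - Q̄)` is conditionally centred given `(A, W)`, since
`Q̄ · E[Δ | A, W] = E[Y Δ | A, W]`; once moreover `Q̄ᵥ = Q₀ᵥ` a.s., the residual
`1{A ≥ v} (Q̄ - Q̄ᵥ)` is conditionally centred given `W`. Each correction term integrates such a
residual against a bounded weight measurable for the conditioning σ-algebra, so by the tower
property it vanishes whatever `ḡ` and `Ḡ` are, leaving `Ψ̄ = E[Q̄ᵥ] = E[Q₀ᵥ] = Ψ₀`.
-/

open MeasureTheory ProbabilityTheory Filter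

section Orthogonality

variable {Ω : Type*} {m mΩ : MeasurableSpace Ω} {μ : Measure Ω}

theorem condExp_sub_mul_eq_zero_of_eq_condExp_div {D Z R : Ω → ℝ}
    (hR : StronglyMeasurable[m] R) (hD : Integrable D μ) (hZD : Integrable (Z * D) μ)
    (hRD : Integrable (R * D) μ) (hD_ne : ∀ᵐ ω ∂μ, μ[D | m] ω ≠ 0)
    (hR_eq : R =ᵐ[μ] μ[Z * D | m] / μ[D | m]) :
    μ[(Z - R) * D | m] =ᵐ[μ] 0 := by
  rw [sub_mul]
  filter_upwards [condExp_sub hZD hRD m, condExp_mul_of_stronglyMeasurable_left hR hRD hD,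
    hR_eq, hD_ne] with ω hsub hpull hRω hDω
  rw [hsub, Pi.sub_apply, hpull, Pi.mul_apply, hRω, Pi.div_apply, div_mul_cancel₀ _ hDω,
    sub_self, Pi.zero_apply]

variable [IsFiniteMeasure μ]

theorem integral_mul_eq_zero_of_condExp_eq_zero (hm : m ≤ mΩ)
    {f h : Ω → ℝ} {C : ℝ} (hf : StronglyMeasurable[m] f) (hf_bound : ∀ ω, ‖f ω‖ ≤ C)
    (hh : Integrable h μ) (hh_cond : μ[h | m] =ᵐ[μ] 0) :
    ∫ ω, f ω * h ω ∂μ = 0 := by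
  have hfh : Integrable (f * h) μ :=
    hh.bdd_mul (hf.mono hm).aestronglyMeasurable (ae_of_all _ hf_bound)
  calc ∫ ω, f ω * h ω ∂μ = ∫ ω, μ[f * h | m] ω ∂μ := (integral_condExp hm).symm
    _ = ∫ ω, (0 : ℝ) ∂μ := by
      refine integral_congr_ae ?_
      filter_upwards [condExp_mul_of_stronglyMeasurable_left hf hfh hh, hh_cond] with ω h1 h2
      simp [h1, h2]
    _ = 0 := integral_zero _ _

theorem integral_mul_sub_mul_eq_zero_of_eq_condExp_div (hm : m ≤ mΩ)
    {f D Z R : Ω → ℝ} {C C' : ℝ} (hf : StronglyMeasurable[m] f) (hf_bound : ∀ ω, ‖f ω‖ ≤ C)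
    (hR : StronglyMeasurable[m] R) (hR_bound : ∀ ω, ‖R ω‖ ≤ C')
    (hD : Integrable D μ) (hZD : Integrable (Z * D) μ) (hD_ne : ∀ᵐ ω ∂μ, μ[D | m] ω ≠ 0)
    (hR_eq : R =ᵐ[μ] μ[Z * D | m] / μ[D | m]) :
    ∫ ω, f ω * ((Z ω - R ω) * D ω) ∂μ = 0 := by
  have hRD : Integrable (R * D) μ :=
    hD.bdd_mul (hR.mono hm).aestronglyMeasurable (ae_of_all _ hR_bound)
  refine integral_mul_eq_zero_of_condExp_eq_zero hm hf hf_bound ?_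
    (condExp_sub_mul_eq_zero_of_eq_condExp_div hR hD hZD hRD hD_ne hR_eq)
  have hZRD := hZD.sub hRD
  rwa [← sub_mul] at hZRD

end Orthogonality

theorem norm_le_one_of_mem_Icc {x : ℝ} (hx : x ∈ Set.Icc 0 1) : ‖x‖ ≤ 1 := by
  rw [Real.norm_of_nonneg hx.1]
  exact hx.2

theorem norm_div_le_one_div {x y δ : ℝ} (hδ : 0 < δ) (hx : ‖x‖ ≤ 1) (hy : δ ≤ y) :
    ‖x / y‖ ≤ 1 / δ := by
  rw [norm_div, Real.norm_of_nonneg (hδ.le.trans hy)]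
  gcongr

theorem stmt11_general
    {Ω 𝒲 : Type*} [mΩ : MeasurableSpace Ω] [MeasurableSpace 𝒲]
    (μ : Measure Ω) [IsProbabilityMeasure μ]
    (W : Ω → 𝒲) (A Δ Y : Ω → ℝ)
    (hWmeas : Measurable W) (hAmeas : Measurable A)
    (hΔmeas : Measurable Δ) (hYmeas : Measurable Y)
    (hΔ01 : ∀ ω, Δ ω = 0 ∨ Δ ω = 1) (hY01 : ∀ ω, Y ω ∈ Set.Icc (0 : ℝ) 1)
    (v δ : ℝ) (hδ0 : 0 < δ)
    (m0 m1 : MeasurableSpace Ω)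
    (hm0 : m0 = MeasurableSpace.comap W inferInstance)
    (hm1 : m1 = MeasurableSpace.comap (fun ω => (A ω, W ω)) inferInstance)
    (G₀ g₀ Q₀ Q₀ᵥ : Ω → ℝ) (Ψ₀ : ℝ)
    (hG₀ : G₀ = μ[Δ | m1])
    (hg₀ : g₀ = μ[fun ω => if v ≤ A ω then (1 : ℝ) else 0 | m0])
    (hQ₀ : Q₀ = fun ω => ((μ[fun ω' => Y ω' * Δ ω' | m1]) ω) / G₀ ω)
    (hQ₀ᵥ : Q₀ᵥ = fun ω =>
      ((μ[fun ω' => Q₀ ω' * (if v ≤ A ω' then (1 : ℝ) else 0) | m0]) ω) / g₀ ω)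
    (hΨ₀ : Ψ₀ = ∫ ω, Q₀ᵥ ω ∂μ)
    (hG₀pos : ∀ᵐ ω ∂μ, δ ≤ G₀ ω)
    (hg₀pos : ∀ᵐ ω ∂μ, δ ≤ g₀ ω)
    (Gbar gbar Qbar Qbarv : Ω → ℝ)
    (hGbarMeas : Measurable[m1] Gbar) (hgbarMeas : Measurable[m0] gbar)
    (hQbarMeas : Measurable[m1] Qbar) (hQbarvMeas : Measurable[m0] Qbarv)
    (hGbarB : ∀ ω, Gbar ω ∈ Set.Icc δ 1) (hgbarB : ∀ ω, gbar ω ∈ Set.Icc δ 1)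
    (hQbarB : ∀ ω, Qbar ω ∈ Set.Icc (0 : ℝ) 1) (hQbarvB : ∀ ω, Qbarv ω ∈ Set.Icc (0 : ℝ) 1)
    (Psibar : ℝ) (hPsibar : Psibar = ∫ ω, Qbarv ω ∂μ)
    (hQbarEq : Qbar =ᵐ[μ] Q₀) (hQbarvEq : Qbarv =ᵐ[μ] Q₀ᵥ) :
    Psibar
      + ∫ ω, ((if v ≤ A ω then (1 : ℝ) else 0) * Δ ω / (gbar ω * Gbar ω)) * (Y ω - Qbar ω) ∂μ
      + ∫ ω, ((if v ≤ A ω then (1 : ℝ) else 0) / gbar ω) * (Qbar ω - Qbarv ω) ∂μ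
      = Ψ₀ := by
  set χ : Ω → ℝ := fun ω => if v ≤ A ω then 1 else 0
  have hAW : Measurable[m1] fun ω => (A ω, W ω) := hm1 ▸ comap_measurable _
  have hm1Ω : m1 ≤ mΩ := hm1 ▸ (hAmeas.prodMk hWmeas).comap_le
  have hm01 : m0 ≤ m1 := hm0 ▸ (measurable_snd.comp hAW).comap_le
  have hχ : Measurable[m1] χ :=
    Measurable.ite (measurableSet_le measurable_const (measurable_fst.comp hAW))
      measurable_const measurable_const
  have hχ_bound (ω : Ω) : ‖χ ω‖ ≤ 1 := norm_le_one_of_mem_Icc (by unfold χ; split_ifs <;> simp)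
  have hΔ_bound (ω : Ω) : ‖Δ ω‖ ≤ 1 :=
    norm_le_one_of_mem_Icc (by rcases hΔ01 ω with h | h <;> simp [h])
  have hQbar_bound (ω : Ω) : ‖Qbar ω‖ ≤ 1 := norm_le_one_of_mem_Icc (hQbarB ω)
  have hΔ : Integrable Δ μ := .of_bound hΔmeas.aestronglyMeasurable 1 (ae_of_all _ hΔ_bound)
  have hχint : Integrable χ μ :=
    .of_bound (hχ.mono hm1Ω le_rfl).aestronglyMeasurable 1 (ae_of_all _ hχ_bound)
  have hfirst : ∫ ω, (χ ω * Δ ω / (gbar ω * Gbar ω)) * (Y ω - Qbar ω) ∂μ = 0 := by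
    have hweight (ω : Ω) : ‖χ ω / (gbar ω * Gbar ω)‖ ≤ 1 / (δ * δ) :=
      norm_div_le_one_div (mul_pos hδ0 hδ0) (hχ_bound ω)
        (mul_le_mul (hgbarB ω).1 (hGbarB ω).1 hδ0.le (hδ0.le.trans (hgbarB ω).1))
    have hYΔ : Integrable (Y * Δ) μ := hΔ.bdd_mul hYmeas.aestronglyMeasurable
      (ae_of_all _ fun ω => norm_le_one_of_mem_Icc (hY01 ω))
    have hQbar_eq : Qbar =ᵐ[μ] μ[Y * Δ | m1] / μ[Δ | m1] := by
      filter_upwards [hQbarEq] with ω h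
      rw [h, hQ₀, hG₀]; rfl
    rw [← integral_mul_sub_mul_eq_zero_of_eq_condExp_div hm1Ω
      (hχ.div ((hgbarMeas.mono hm01 le_rfl).mul hGbarMeas)).stronglyMeasurable hweight
      hQbarMeas.stronglyMeasurable hQbar_bound hΔ hYΔ
      (hG₀ ▸ hG₀pos.mono fun ω h => (hδ0.trans_le h).ne') hQbar_eq]
    congr 1; ext ω; simp only [Pi.div_apply, Pi.mul_apply]; ring
  have hsecond : ∫ ω, (χ ω / gbar ω) * (Qbar ω - Qbarv ω) ∂μ = 0 := by
    have hQbarχ : Integrable (Qbar * χ) μ :=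
      hχint.bdd_mul (hQbarMeas.mono hm1Ω le_rfl).aestronglyMeasurable (ae_of_all _ hQbar_bound)
    have hQbarv_eq : Qbarv =ᵐ[μ] μ[Qbar * χ | m0] / μ[χ | m0] := by
      filter_upwards [hQbarvEq, condExp_congr_ae (m := m0) (hQbarEq.mul (EventuallyEq.refl _ χ))]
        with ω h hcond
      rw [h, hQ₀ᵥ, hg₀, Pi.div_apply, hcond]; rfl
    rw [← integral_mul_sub_mul_eq_zero_of_eq_condExp_div (hm01.trans hm1Ω)
      (measurable_const.div hgbarMeas).stronglyMeasurable
      (fun ω => norm_div_le_one_div hδ0 norm_one.le (hgbarB ω).1)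
      hQbarvMeas.stronglyMeasurable (fun ω => norm_le_one_of_mem_Icc (hQbarvB ω)) hχint hQbarχ
      (hg₀ ▸ hg₀pos.mono fun ω h => (hδ0.trans_le h).ne') hQbarv_eq]
    congr 1; ext ω; simp only [Pi.div_apply]; ring
  rw [hfirst, hsecond, hPsibar, hΨ₀, integral_congr_ae hQbarvEq]
  ring

/-- double robustness, second case: if `Q̄ = Q₀` a.s. and `Q̄ᵥ = Q₀ᵥ` a.s.,
then the one-step/targeted population value recovers `Ψ₀` for every `ḡ`, `Ḡ`. -/
theorem stmt11
    {Ω 𝒲 : Type*} [mΩ : MeasurableSpace Ω] [MeasurableSpace 𝒲]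
    (μ : Measure Ω) [IsProbabilityMeasure μ]
    (W : Ω → 𝒲) (A Δ Y : Ω → ℝ)
    (hWmeas : Measurable W) (hAmeas : Measurable A)
    (hΔmeas : Measurable Δ) (hYmeas : Measurable Y)
    (hΔ01 : ∀ ω, Δ ω = 0 ∨ Δ ω = 1) (hY01 : ∀ ω, Y ω ∈ Set.Icc (0 : ℝ) 1)
    (v δ : ℝ) (hδ0 : 0 < δ) (hδ1 : δ < 1)
    (m0 m1 m2 : MeasurableSpace Ω)
    (hm0 : m0 = MeasurableSpace.comap W inferInstance)
    (hm1 : m1 = MeasurableSpace.comap (fun ω => (A ω, W ω)) inferInstance)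
    (hm2 : m2 = MeasurableSpace.comap (fun ω => (A ω, W ω, Δ ω)) inferInstance)
    (G₀ g₀ Q₀ Q₀ᵥ : Ω → ℝ) (Ψ₀ : ℝ)
    (hG₀ : G₀ = μ[Δ | m1])
    (hg₀ : g₀ = μ[fun ω => if v ≤ A ω then (1 : ℝ) else 0 | m0])
    (hQ₀ : Q₀ = fun ω => ((μ[fun ω' => Y ω' * Δ ω' | m1]) ω) / G₀ ω)
    (hQ₀ᵥ : Q₀ᵥ = fun ω =>
      ((μ[fun ω' => Q₀ ω' * (if v ≤ A ω' then (1 : ℝ) else 0) | m0]) ω) / g₀ ω)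
    (hΨ₀ : Ψ₀ = ∫ ω, Q₀ᵥ ω ∂μ)
    (hG₀pos : ∀ᵐ ω ∂μ, δ ≤ G₀ ω)
    (hg₀pos : ∀ᵐ ω ∂μ, δ ≤ g₀ ω)
    (Gbar gbar Qbar Qbarv : Ω → ℝ)
    (hGbarMeas : Measurable[m1] Gbar) (hgbarMeas : Measurable[m0] gbar)
    (hQbarMeas : Measurable[m1] Qbar) (hQbarvMeas : Measurable[m0] Qbarv)
    (hGbarB : ∀ ω, Gbar ω ∈ Set.Icc δ 1) (hgbarB : ∀ ω, gbar ω ∈ Set.Icc δ 1)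
    (hQbarB : ∀ ω, Qbar ω ∈ Set.Icc (0 : ℝ) 1) (hQbarvB : ∀ ω, Qbarv ω ∈ Set.Icc (0 : ℝ) 1)
    (Psibar : ℝ) (hPsibar : Psibar = ∫ ω, Qbarv ω ∂μ)
    (hQbarEq : Qbar =ᵐ[μ] Q₀) (hQbarvEq : Qbarv =ᵐ[μ] Q₀ᵥ) :
    Psibar
      + ∫ ω, ((if v ≤ A ω then (1 : ℝ) else 0) * Δ ω / (gbar ω * Gbar ω)) * (Y ω - Qbar ω) ∂μ
      + ∫ ω, ((if v ≤ A ω then (1 : ℝ) else 0) / gbar ω) * (Qbar ω - Qbarv ω) ∂μ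
      = Ψ₀ :=
  stmt11_general (mΩ := mΩ) μ W A Δ Y hWmeas hAmeas hΔmeas hYmeas hΔ01 hY01 v δ hδ0 m0 m1 hm0 hm1 G₀
    g₀ Q₀ Q₀ᵥ Ψ₀ hG₀ hg₀ hQ₀ hQ₀ᵥ hΨ₀ hG₀pos hg₀pos Gbar gbar Qbar Qbarv hGbarMeas hgbarMeas
    hQbarMeas hQbarvMeas hGbarB hgbarB hQbarB hQbarvB Psibar hPsibar hQbarEq hQbarvEq
end

section
/- Under the base setup, suppose E[Y·1{A ≥ v}] = 0 (the threshold v has zero risk). Then Q₀·1{A ≥ v} = 0 a.s., Q₀ᵥ = 0 a.s., Ψ₀ = 0, and the efficient influence function vanishes identically: D₀ = 0 almost surely. -/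
open MeasureTheory ProbabilityTheory

/-! If `Y ≥ 0` and `E[Y·1{A ≥ v}] = 0`, then `Y` vanishes a.e. on `{A ≥ v}`. Since this event is
`σ(A, W)`-measurable, the conditional expectation `E[YΔ ∣ A, W]`, and hence `Q₀`, also vanishes
on it; so `Q₀·1{A ≥ v}` is a.e. zero, and then so are `Q₀ᵥ`, `Ψ₀` and every term of `D₀`. -/

theorem indicator_condExp_ae_eq_zero {Ω E : Type*} {m m₀ : MeasurableSpace Ω} {μ : Measure Ω}
    [NormedAddCommGroup E] [NormedSpace ℝ E] [CompleteSpace E]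
    {f : Ω → E} {s : Set Ω} (hs : MeasurableSet[m] s)
    (hf : s.indicator f =ᵐ[μ] 0) : s.indicator (μ[f | m]) =ᵐ[μ] 0 := by
  by_cases hfi : Integrable f μ
  · calc s.indicator (μ[f | m]) =ᵐ[μ] μ[s.indicator f | m] := (condExp_indicator hfi hs).symm
      _ =ᵐ[μ] μ[(0 : Ω → E) | m] := condExp_congr_ae hf
      _ = 0 := condExp_zero
  · rw [condExp_of_not_integrable hfi, Set.indicator_zero']

theorem mul_ite_le_one_zero_eq_indicator {Ω : Type*} (f A : Ω → ℝ) (v : ℝ) :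
    (fun ω => f ω * if v ≤ A ω then (1 : ℝ) else 0) = {ω | v ≤ A ω}.indicator f := by
  ext ω
  simp [Set.indicator_apply]

theorem stmt15_general
    {Ω 𝒲 : Type*} [mΩ : MeasurableSpace Ω] [MeasurableSpace 𝒲]
    (μ : Measure Ω) [IsProbabilityMeasure μ]
    (W : Ω → 𝒲) (A Δ Y : Ω → ℝ)
    (hAmeas : Measurable A)
    (hYmeas : Measurable Y)
    (hY01 : ∀ ω, Y ω ∈ Set.Icc (0 : ℝ) 1)
    (v : ℝ)
    (m0 m1 : MeasurableSpace Ω)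
    (hm1 : m1 = MeasurableSpace.comap (fun ω => (A ω, W ω)) inferInstance)
    (G₀ g₀ Q₀ Q₀ᵥ : Ω → ℝ) (Ψ₀ : ℝ)
    (hQ₀ : Q₀ = fun ω => ((μ[fun ω' => Y ω' * Δ ω' | m1]) ω) / G₀ ω)
    (hQ₀ᵥ : Q₀ᵥ = fun ω =>
      ((μ[fun ω' => Q₀ ω' * (if v ≤ A ω' then (1 : ℝ) else 0) | m0]) ω) / g₀ ω)
    (hΨ₀ : Ψ₀ = ∫ ω, Q₀ᵥ ω ∂μ)
    (D₀ : Ω → ℝ)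
    (hD₀ : D₀ = fun ω =>
      ((if v ≤ A ω then (1 : ℝ) else 0) / g₀ ω) * (Δ ω / G₀ ω) * (Y ω - Q₀ ω)
      + ((if v ≤ A ω then (1 : ℝ) else 0) / g₀ ω) * (Q₀ ω - Q₀ᵥ ω) + (Q₀ᵥ ω - Ψ₀))
    (hzero : ∫ ω, Y ω * (if v ≤ A ω then (1 : ℝ) else 0) ∂μ = 0) :
    ((fun ω => Q₀ ω * (if v ≤ A ω then (1 : ℝ) else 0)) =ᵐ[μ] (0 : Ω → ℝ)) ∧
    (Q₀ᵥ =ᵐ[μ] (0 : Ω → ℝ)) ∧ Ψ₀ = 0 ∧ (D₀ =ᵐ[μ] (0 : Ω → ℝ)) := by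
  simp only [mul_ite_le_one_zero_eq_indicator] at hzero hQ₀ᵥ ⊢
  set s : Set Ω := {ω | v ≤ A ω}
  -- `m0` and `m1` are local instances too, so the ambient σ-algebra `mΩ` has to be named.
  have hs : MeasurableSet[mΩ] s := measurableSet_le measurable_const hAmeas
  have hs₁ : MeasurableSet[m1] s :=
    hm1 ▸ ⟨{p : ℝ × 𝒲 | v ≤ p.1}, measurableSet_le measurable_const measurable_fst, rfl⟩
  have hY : s.indicator Y =ᵐ[μ] 0 :=
    (integral_eq_zero_iff_of_nonneg (Set.indicator_nonneg fun ω _ => (hY01 ω).1)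
      ((Integrable.of_mem_Icc 0 1 hYmeas.aemeasurable (.of_forall hY01)).indicator hs)).mp hzero
  have hYΔ : s.indicator (fun ω => Y ω * Δ ω) =ᵐ[μ] 0 := by
    filter_upwards [hY] with ω hω
    simp [Set.indicator_mul_left, hω]
  have hQ : s.indicator Q₀ =ᵐ[μ] 0 := by
    filter_upwards [indicator_condExp_ae_eq_zero hs₁ hYΔ] with ω hω
    simp only [hQ₀, Set.indicator_apply, Pi.zero_apply] at hω ⊢
    split_ifs at hω ⊢ <;> simp [hω]
  have hQᵥ : Q₀ᵥ =ᵐ[μ] 0 := by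
    have hc : μ[s.indicator Q₀ | m0] =ᵐ[μ] 0 :=
      (condExp_congr_ae (m₀ := mΩ) hQ).trans (condExp_zero (m₀ := mΩ)).eventuallyEq
    filter_upwards [hc] with ω hω
    simp [hQ₀ᵥ, hω]
  have hΨ : Ψ₀ = 0 := by simp [hΨ₀, integral_congr_ae hQᵥ]
  refine ⟨hQ, hQᵥ, hΨ, ?_⟩
  filter_upwards [hY, hQ, hQᵥ] with ω hYω hQω hQᵥω
  simp only [hD₀, hQᵥω, hΨ, Pi.zero_apply]
  by_cases hω : v ≤ A ω
  · have hω' : ω ∈ s := hω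
    simp only [Set.indicator_of_mem hω', Pi.zero_apply] at hYω hQω
    simp [hYω, hQω]
  · simp [hω]

/-- at a threshold of zero risk (`E[Y·1{A ≥ v}] = 0`), the nuisances, the
estimand and the efficient influence function all vanish. -/
theorem stmt15
    {Ω 𝒲 : Type*} [mΩ : MeasurableSpace Ω] [MeasurableSpace 𝒲]
    (μ : Measure Ω) [IsProbabilityMeasure μ]
    (W : Ω → 𝒲) (A Δ Y : Ω → ℝ)
    (hWmeas : Measurable W) (hAmeas : Measurable A)
    (hΔmeas : Measurable Δ) (hYmeas : Measurable Y)
    (hΔ01 : ∀ ω, Δ ω = 0 ∨ Δ ω = 1) (hY01 : ∀ ω, Y ω ∈ Set.Icc (0 : ℝ) 1)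
    (v δ : ℝ) (hδ0 : 0 < δ) (hδ1 : δ < 1)
    (m0 m1 m2 : MeasurableSpace Ω)
    (hm0 : m0 = MeasurableSpace.comap W inferInstance)
    (hm1 : m1 = MeasurableSpace.comap (fun ω => (A ω, W ω)) inferInstance)
    (hm2 : m2 = MeasurableSpace.comap (fun ω => (A ω, W ω, Δ ω)) inferInstance)
    (G₀ g₀ Q₀ Q₀ᵥ : Ω → ℝ) (Ψ₀ : ℝ)
    (hG₀ : G₀ = μ[Δ | m1])
    (hg₀ : g₀ = μ[fun ω => if v ≤ A ω then (1 : ℝ) else 0 | m0])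
    (hQ₀ : Q₀ = fun ω => ((μ[fun ω' => Y ω' * Δ ω' | m1]) ω) / G₀ ω)
    (hQ₀ᵥ : Q₀ᵥ = fun ω =>
      ((μ[fun ω' => Q₀ ω' * (if v ≤ A ω' then (1 : ℝ) else 0) | m0]) ω) / g₀ ω)
    (hΨ₀ : Ψ₀ = ∫ ω, Q₀ᵥ ω ∂μ)
    (hG₀pos : ∀ᵐ ω ∂μ, δ ≤ G₀ ω)
    (hg₀pos : ∀ᵐ ω ∂μ, δ ≤ g₀ ω)
    (D₀ : Ω → ℝ)
    (hD₀ : D₀ = fun ω =>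
      ((if v ≤ A ω then (1 : ℝ) else 0) / g₀ ω) * (Δ ω / G₀ ω) * (Y ω - Q₀ ω)
      + ((if v ≤ A ω then (1 : ℝ) else 0) / g₀ ω) * (Q₀ ω - Q₀ᵥ ω) + (Q₀ᵥ ω - Ψ₀))
    (hzero : ∫ ω, Y ω * (if v ≤ A ω then (1 : ℝ) else 0) ∂μ = 0) :
    ((fun ω => Q₀ ω * (if v ≤ A ω then (1 : ℝ) else 0)) =ᵐ[μ] (0 : Ω → ℝ)) ∧
    (Q₀ᵥ =ᵐ[μ] (0 : Ω → ℝ)) ∧ Ψ₀ = 0 ∧ (D₀ =ᵐ[μ] (0 : Ω → ℝ)) :=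
  stmt15_general (mΩ := mΩ) μ W A Δ Y hAmeas hYmeas hY01 v m0 m1 hm1 G₀ g₀ Q₀ Q₀ᵥ Ψ₀ hQ₀ hQ₀ᵥ hΨ₀ D₀
    hD₀ hzero
end

section
/- Under the base setup, assume additionally that σ(Δ) is conditionally independent of σ(A, Y) given 𝒢₀ (quasi-informative missingness), and write Ḡ₀ := E[Δ ∣ 𝒢₀] (so Ḡ₀ ≥ δ a.s.). Then the threshold-response reduces to the binary-treatment-specific mean form: Ψ₀ = E[ E[Y·Δ·1{A ≥ v} ∣ 𝒢₀] / (Ḡ₀·g₀) ]. -/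
/-!
Quasi-informative missingness makes `Δ` conditionally mean-independent of `A` given `W`:
`E[Δ ∣ A, W] = E[Δ ∣ W]`, i.e. `G₀ = Ḡ₀` a.s. (test both sides on the π-system of sets `B ∩ C`
with `B ∈ σ(W)`, `C ∈ σ(A, Y)`, which generates `σ(W) ⊔ σ(A, Y) ⊇ σ(A, W)`). Hence
`Q₀ · 1{A ≥ v} = E[YΔ 1{A ≥ v} ∣ A, W] / Ḡ₀`, and since `Ḡ₀` is `σ(W)`-measurable the tower
property gives `E[Q₀ · 1{A ≥ v} ∣ W] = E[YΔ 1{A ≥ v} ∣ W] / Ḡ₀`; divide by `g₀` and integrate.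
-/

open MeasureTheory ProbabilityTheory

/-- Conditional independence of two sub-σ-algebras `m₁`, `m₂` given a third `m`,
stated as the a.s. factorization of conditional probabilities given `m`. -/
def CondIndepGiven {Ω : Type*} [MeasurableSpace Ω] (μ : Measure Ω)
    (m m₁ m₂ : MeasurableSpace Ω) : Prop :=
  ∀ s t : Set Ω, (MeasurableSet[m₁]) s → MeasurableSet[m₂] t →
    μ[(s ∩ t).indicator (fun _ => (1 : ℝ)) | m] =ᵐ[μ]
      fun ω => ((μ[s.indicator (fun _ => (1 : ℝ)) | m]) ω) *
        ((μ[t.indicator (fun _ => (1 : ℝ)) | m]) ω)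

section PiSystem

variable {Ω : Type*}

lemma IsPiSystem.image2_inter {C D : Set (Set Ω)} (hC : IsPiSystem C) (hD : IsPiSystem D) :
    IsPiSystem (Set.image2 (· ∩ ·) C D) := by
  rintro _ ⟨b₁, hb₁, c₁, hc₁, rfl⟩ _ ⟨b₂, hb₂, c₂, hc₂, rfl⟩ hne
  rw [Set.inter_inter_inter_comm] at hne ⊢
  exact Set.mem_image2_of_mem (hC _ hb₁ _ hb₂ hne.left) (hD _ hc₁ _ hc₂ hne.right)

lemma MeasurableSpace.sup_eq_generateFrom_image2_inter (m₁ m₂ : MeasurableSpace Ω) :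
    m₁ ⊔ m₂ = MeasurableSpace.generateFrom
      (Set.image2 (· ∩ ·) {s | MeasurableSet[m₁] s} {s | MeasurableSet[m₂] s}) := by
  refine le_antisymm (sup_le (fun b hb => ?_) (fun c hc => ?_))
    (MeasurableSpace.generateFrom_le ?_)
  · rw [← Set.inter_univ b]
    exact MeasurableSpace.measurableSet_generateFrom
      (Set.mem_image2_of_mem hb (@MeasurableSet.univ _ m₂))
  · rw [← Set.univ_inter c]
    exact MeasurableSpace.measurableSet_generateFrom
      (Set.mem_image2_of_mem (@MeasurableSet.univ _ m₁) hc)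
  · rintro _ ⟨b, hb, c, hc, rfl⟩
    exact (le_sup_left (b := m₂) _ hb).inter (le_sup_right (a := m₁) _ hc)

lemma setIntegral_eq_of_isPiSystem {E : Type*} [NormedAddCommGroup E] [NormedSpace ℝ E]
    {m mΩ : MeasurableSpace Ω} {μ : Measure Ω} {S : Set (Set Ω)} {f g : Ω → E}
    (hm : m ≤ mΩ) (h_gen : m = MeasurableSpace.generateFrom S) (h_pi : IsPiSystem S)
    (hf : Integrable f μ) (hg : Integrable g μ) (h_univ : ∫ x, f x ∂μ = ∫ x, g x ∂μ)
    (h_basic : ∀ t ∈ S, ∫ x in t, f x ∂μ = ∫ x in t, g x ∂μ)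
    {t : Set Ω} (ht : MeasurableSet[m] t) : ∫ x in t, f x ∂μ = ∫ x in t, g x ∂μ := by
  induction t, ht using MeasurableSpace.induction_on_inter h_gen h_pi with
  | empty => simp
  | basic t ht => exact h_basic t ht
  | compl t ht ih => rw [setIntegral_compl (hm t ht) hf, setIntegral_compl (hm t ht) hg, h_univ, ih]
  | iUnion t hdisj ht ih =>
    rw [integral_iUnion (fun i => hm _ (ht i)) hdisj hf.integrableOn,
      integral_iUnion (fun i => hm _ (ht i)) hdisj hg.integrableOn]
    exact tsum_congr ih

end PiSystem

section CondIndepGiven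

variable {Ω : Type*} {m m' m₁ m₂ mΩ : MeasurableSpace Ω} {μ : Measure Ω} [IsFiniteMeasure μ]
  {s : Set Ω}

lemma condExp_indicator_sup_ae_eq_of_condIndepGiven (hm : m ≤ mΩ) (hm₂ : m₂ ≤ mΩ)
    (hCI : CondIndepGiven μ m m₁ m₂) (hs₁ : MeasurableSet[m₁] s) (hs : MeasurableSet s) :
    μ[s.indicator (fun _ => (1 : ℝ)) | m ⊔ m₂] =ᵐ[μ] μ[s.indicator (fun _ => (1 : ℝ)) | m] := by
  set g := μ[s.indicator (fun _ => (1 : ℝ)) | m]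
  have h_int : ∀ {t : Set Ω}, MeasurableSet t → Integrable (t.indicator fun _ => (1 : ℝ)) μ :=
    fun ht => (integrable_const 1).indicator ht
  have h_rect : ∀ b c, MeasurableSet[m] b → MeasurableSet[m₂] c →
      ∫ x in b ∩ c, g x ∂μ = ∫ x in b ∩ c, s.indicator (fun _ => (1 : ℝ)) x ∂μ := by
    intro b c hb hc
    have hc' : MeasurableSet c := hm₂ c hc
    have h_eq : c.indicator g = g * c.indicator fun _ => 1 := by
      ext x; by_cases hx : x ∈ c <;> simp [hx]
    have h_pull : μ[c.indicator g | m] =ᵐ[μ] g * μ[c.indicator (fun _ => (1 : ℝ)) | m] := by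
      rw [h_eq]
      exact condExp_mul_of_stronglyMeasurable_left stronglyMeasurable_condExp
        (h_eq ▸ integrable_condExp.indicator hc') (h_int hc')
    calc ∫ x in b ∩ c, g x ∂μ = ∫ x in b, c.indicator g x ∂μ := (setIntegral_indicator hc').symm
    _ = ∫ x in b, μ[c.indicator g | m] x ∂μ :=
      (setIntegral_condExp hm (integrable_condExp.indicator hc') hb).symm
    _ = ∫ x in b, μ[(s ∩ c).indicator (fun _ => (1 : ℝ)) | m] x ∂μ := by
      refine setIntegral_congr_ae (hm b hb) ?_
      filter_upwards [h_pull, hCI s c hs₁ hc] with x h_pull_x hCI_x _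
      rw [h_pull_x, hCI_x]
      rfl
    _ = ∫ x in b, (s ∩ c).indicator (fun _ => (1 : ℝ)) x ∂μ :=
      setIntegral_condExp hm (h_int (hs.inter hc')) hb
    _ = ∫ x in b ∩ c, s.indicator (fun _ => (1 : ℝ)) x ∂μ := by
      rw [Set.inter_comm s c, ← Set.indicator_indicator, setIntegral_indicator hc']
  have hg : StronglyMeasurable[m ⊔ m₂] g := stronglyMeasurable_condExp.mono le_sup_left
  symm
  refine ae_eq_condExp_of_forall_setIntegral_eq (sup_le hm hm₂) (h_int hs)
    (fun t _ _ => integrable_condExp.integrableOn) (fun t ht _ => ?_) hg.aestronglyMeasurable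
  refine setIntegral_eq_of_isPiSystem (sup_le hm hm₂)
    (MeasurableSpace.sup_eq_generateFrom_image2_inter m m₂)
    ((@MeasurableSpace.isPiSystem_measurableSet _ m).image2_inter
      (@MeasurableSpace.isPiSystem_measurableSet _ m₂))
    integrable_condExp (h_int hs) ?_ ?_ ht
  · simpa using h_rect _ _ MeasurableSet.univ MeasurableSet.univ
  · rintro _ ⟨b, hb, c, hc, rfl⟩
    exact h_rect b c hb hc

lemma condExp_indicator_ae_eq_of_condIndepGiven (hm : m ≤ mΩ) (hm₂ : m₂ ≤ mΩ)
    (hmm' : m ≤ m') (hm' : m' ≤ m ⊔ m₂) (hCI : CondIndepGiven μ m m₁ m₂)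
    (hs₁ : MeasurableSet[m₁] s) (hs : MeasurableSet s) :
    μ[s.indicator (fun _ => (1 : ℝ)) | m'] =ᵐ[μ] μ[s.indicator (fun _ => (1 : ℝ)) | m] :=
  calc μ[s.indicator (fun _ => (1 : ℝ)) | m']
      =ᵐ[μ] μ[μ[s.indicator (fun _ => (1 : ℝ)) | m ⊔ m₂] | m'] :=
        (condExp_condExp_of_le hm' (sup_le hm hm₂)).symm
    _ =ᵐ[μ] μ[μ[s.indicator (fun _ => (1 : ℝ)) | m] | m'] :=
        condExp_congr_ae (condExp_indicator_sup_ae_eq_of_condIndepGiven hm hm₂ hCI hs₁ hs)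
    _ = μ[s.indicator (fun _ => (1 : ℝ)) | m] :=
        condExp_of_stronglyMeasurable (hm'.trans (sup_le hm hm₂))
          (stronglyMeasurable_condExp.mono hmm') integrable_condExp

end CondIndepGiven

section CondExp

variable {Ω : Type*} {m m' mΩ : MeasurableSpace Ω} {μ : Measure Ω}

lemma Integrable.div_of_le_ae {f G : Ω → ℝ} {δ : ℝ} (hf : Integrable f μ)
    (hG : AEStronglyMeasurable G μ) (hδ : 0 < δ) (hGδ : ∀ᵐ ω ∂μ, δ ≤ G ω) :
    Integrable (fun ω => f ω / G ω) μ := by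
  simp_rw [div_eq_inv_mul]
  refine hf.bdd_mul (c := δ⁻¹) hG.aemeasurable.inv.aestronglyMeasurable ?_
  filter_upwards [hGδ] with ω hω
  rw [norm_inv, Real.norm_of_nonneg (hδ.le.trans hω)]
  exact inv_anti₀ hδ hω

lemma condExp_condExp_div_of_le {f G : Ω → ℝ} (hmm' : m ≤ m') (hm' : m' ≤ mΩ)
    [SigmaFinite (μ.trim hm')]
    (hG : StronglyMeasurable[m] G) (hint : Integrable (fun ω => μ[f | m'] ω / G ω) μ) :
    μ[fun ω => μ[f | m'] ω / G ω | m] =ᵐ[μ] fun ω => μ[f | m] ω / G ω := by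
  have h_eq : (fun ω => μ[f | m'] ω / G ω) = G⁻¹ * μ[f | m'] := by
    ext ω; exact div_eq_inv_mul _ _
  rw [h_eq] at hint ⊢
  filter_upwards [condExp_mul_of_stronglyMeasurable_left hG.measurable.inv.stronglyMeasurable
    hint integrable_condExp, condExp_condExp_of_le (f := f) hmm' hm'] with ω h_pull h_tower
  rw [h_pull, Pi.mul_apply, h_tower, Pi.inv_apply, div_eq_inv_mul]

lemma condExp_condExp_div_mul_ae_eq {f h G G' : Ω → ℝ} {δ : ℝ}
    (hmm' : m ≤ m') (hm' : m' ≤ mΩ) [SigmaFinite (μ.trim hm')] (hf : Integrable f μ)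
    (hfh : Integrable (f * h) μ) (hh : StronglyMeasurable[m'] h) (hG : StronglyMeasurable[m] G)
    (hδ : 0 < δ) (hGδ : ∀ᵐ ω ∂μ, δ ≤ G ω) (hG' : G' =ᵐ[μ] G) :
    μ[fun ω => μ[f | m'] ω / G' ω * h ω | m] =ᵐ[μ] fun ω => μ[f * h | m] ω / G ω := by
  have h_inner : (fun ω => μ[f | m'] ω / G' ω * h ω) =ᵐ[μ] fun ω => μ[f * h | m'] ω / G ω := by
    filter_upwards [hG', condExp_mul_of_stronglyMeasurable_right hh hfh hf] with ω hG'ω hω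
    rw [hω, hG'ω, Pi.mul_apply, div_mul_eq_mul_div]
  exact (condExp_congr_ae h_inner).trans (condExp_condExp_div_of_le hmm' hm' hG
    (Integrable.div_of_le_ae integrable_condExp (hG.mono (hmm'.trans hm')).aestronglyMeasurable
      hδ hGδ))

end CondExp

lemma indicator_preimage_one_eq_self {Ω : Type*} {f : Ω → ℝ} (hf : ∀ ω, f ω = 0 ∨ f ω = 1) :
    (f ⁻¹' {1}).indicator (fun _ => (1 : ℝ)) = f := by
  ext ω
  rcases hf ω with h | h <;> simp [h]

lemma condExp_comap_prodMk_ae_eq_of_condIndepGiven {Ω 𝒲 α β : Type*} [mΩ : MeasurableSpace Ω]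
    [MeasurableSpace 𝒲] [MeasurableSpace α] [MeasurableSpace β] {μ : Measure Ω}
    [IsFiniteMeasure μ] {W : Ω → 𝒲} {A : Ω → α} {Y : Ω → β} {Δ : Ω → ℝ}
    (hW : Measurable W) (hA : Measurable A) (hY : Measurable Y) (hΔ : Measurable Δ)
    (hΔ01 : ∀ ω, Δ ω = 0 ∨ Δ ω = 1)
    (hCI : CondIndepGiven μ (MeasurableSpace.comap W inferInstance)
      (MeasurableSpace.comap Δ inferInstance)
      (MeasurableSpace.comap (fun ω => (A ω, Y ω)) inferInstance)) :
    μ[Δ | MeasurableSpace.comap (fun ω => (A ω, W ω)) inferInstance] =ᵐ[μ]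
      μ[Δ | MeasurableSpace.comap W inferInstance] := by
  have hA' : Measurable[MeasurableSpace.comap (fun ω => (A ω, Y ω)) inferInstance] A :=
    measurable_fst.comp (comap_measurable _)
  rw [← indicator_preimage_one_eq_self hΔ01]
  refine condExp_indicator_ae_eq_of_condIndepGiven hW.comap_le (hA.prodMk hY).comap_le
    (MeasurableSpace.comap_le_comap_of_eq_comp Prod.snd measurable_snd rfl)
    ((hA'.mono le_sup_right le_rfl).prodMk ((comap_measurable W).mono le_sup_left le_rfl)).comap_le
    hCI ⟨{1}, measurableSet_singleton 1, rfl⟩ (hΔ (measurableSet_singleton 1))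

theorem stmt19_general
    {Ω 𝒲 : Type*} [mΩ : MeasurableSpace Ω] [MeasurableSpace 𝒲]
    (μ : Measure Ω) [IsProbabilityMeasure μ]
    (W : Ω → 𝒲) (A Δ Y : Ω → ℝ)
    (hWmeas : Measurable W) (hAmeas : Measurable A)
    (hΔmeas : Measurable Δ) (hYmeas : Measurable Y)
    (hΔ01 : ∀ ω, Δ ω = 0 ∨ Δ ω = 1) (hY01 : ∀ ω, Y ω ∈ Set.Icc (0 : ℝ) 1)
    (v δ : ℝ) (hδ0 : 0 < δ)
    (m0 m1 : MeasurableSpace Ω)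
    (hm0 : m0 = MeasurableSpace.comap W inferInstance)
    (hm1 : m1 = MeasurableSpace.comap (fun ω => (A ω, W ω)) inferInstance)
    (G₀ g₀ Q₀ Q₀ᵥ : Ω → ℝ) (Ψ₀ : ℝ)
    (hG₀ : G₀ = μ[Δ | m1])
    (hQ₀ : Q₀ = fun ω => ((μ[fun ω' => Y ω' * Δ ω' | m1]) ω) / G₀ ω)
    (hQ₀ᵥ : Q₀ᵥ = fun ω =>
      ((μ[fun ω' => Q₀ ω' * (if v ≤ A ω' then (1 : ℝ) else 0) | m0]) ω) / g₀ ω)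
    (hΨ₀ : Ψ₀ = ∫ ω, Q₀ᵥ ω ∂μ)
    (hCI : @CondIndepGiven Ω mΩ μ m0 (MeasurableSpace.comap Δ inferInstance)
      (MeasurableSpace.comap (fun ω => (A ω, Y ω)) inferInstance))
    (Gbar₀ : Ω → ℝ) (hGbar₀ : Gbar₀ = μ[Δ | m0])
    (hGbar₀pos : ∀ᵐ ω ∂μ, δ ≤ Gbar₀ ω) :
    Ψ₀ = ∫ ω, ((μ[fun ω' => Y ω' * Δ ω' * (if v ≤ A ω' then (1 : ℝ) else 0) | m0]) ω) /
      (Gbar₀ ω * g₀ ω) ∂μ := by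
  subst hm0 hm1 hG₀ hQ₀ hQ₀ᵥ hΨ₀ hGbar₀
  have hm01 : MeasurableSpace.comap W inferInstance
      ≤ MeasurableSpace.comap (fun ω => (A ω, W ω)) inferInstance :=
    MeasurableSpace.comap_le_comap_of_eq_comp Prod.snd measurable_snd rfl
  have hind : StronglyMeasurable[MeasurableSpace.comap (fun ω => (A ω, W ω)) inferInstance]
      fun ω => if v ≤ A ω then (1 : ℝ) else 0 :=
    (Measurable.ite (measurableSet_le measurable_const (measurable_fst.comp (comap_measurable _)))
      measurable_const measurable_const).stronglyMeasurable
  have hY : Integrable Y μ := .of_bound hYmeas.aestronglyMeasurable 1 (ae_of_all _ fun ω => by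
    rw [Real.norm_eq_abs, abs_le]; exact ⟨by linarith [(hY01 ω).1], (hY01 ω).2⟩)
  have hYΔ : Integrable (fun ω => Y ω * Δ ω) μ :=
    hY.mul_bdd hΔmeas.aestronglyMeasurable (c := 1)
      (ae_of_all _ fun ω => by rcases hΔ01 ω with h | h <;> simp [h])
  have hYΔind : Integrable (fun ω => Y ω * Δ ω * if v ≤ A ω then (1 : ℝ) else 0) μ :=
    hYΔ.mul_bdd (hind.mono (hAmeas.prodMk hWmeas).comap_le).aestronglyMeasurable (c := 1)
      (ae_of_all _ fun ω => by split_ifs <;> simp)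
  refine integral_congr_ae ?_
  filter_upwards [condExp_condExp_div_mul_ae_eq hm01 (hAmeas.prodMk hWmeas).comap_le hYΔ hYΔind
    hind stronglyMeasurable_condExp hδ0 hGbar₀pos
    (condExp_comap_prodMk_ae_eq_of_condIndepGiven hWmeas hAmeas hYmeas hΔmeas hΔ01 hCI)]
    with ω hω
  exact (congrArg (· / g₀ ω) hω).trans (div_div _ _ _)

/-- under quasi-informative missingness (`σ(Δ) ⟂ σ(A, Y) ∣ 𝒢₀`), the
threshold-response reduces to the binary-treatment-specific-mean form
`Ψ₀ = E[ E[Y·Δ·1{A ≥ v} ∣ 𝒢₀] / (Ḡ₀·g₀) ]`. -/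
theorem stmt19
    {Ω 𝒲 : Type*} [mΩ : MeasurableSpace Ω] [MeasurableSpace 𝒲]
    (μ : Measure Ω) [IsProbabilityMeasure μ]
    (W : Ω → 𝒲) (A Δ Y : Ω → ℝ)
    (hWmeas : Measurable W) (hAmeas : Measurable A)
    (hΔmeas : Measurable Δ) (hYmeas : Measurable Y)
    (hΔ01 : ∀ ω, Δ ω = 0 ∨ Δ ω = 1) (hY01 : ∀ ω, Y ω ∈ Set.Icc (0 : ℝ) 1)
    (v δ : ℝ) (hδ0 : 0 < δ) (hδ1 : δ < 1)
    (m0 m1 m2 : MeasurableSpace Ω)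
    (hm0 : m0 = MeasurableSpace.comap W inferInstance)
    (hm1 : m1 = MeasurableSpace.comap (fun ω => (A ω, W ω)) inferInstance)
    (hm2 : m2 = MeasurableSpace.comap (fun ω => (A ω, W ω, Δ ω)) inferInstance)
    (G₀ g₀ Q₀ Q₀ᵥ : Ω → ℝ) (Ψ₀ : ℝ)
    (hG₀ : G₀ = μ[Δ | m1])
    (hg₀ : g₀ = μ[fun ω => if v ≤ A ω then (1 : ℝ) else 0 | m0])
    (hQ₀ : Q₀ = fun ω => ((μ[fun ω' => Y ω' * Δ ω' | m1]) ω) / G₀ ω)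
    (hQ₀ᵥ : Q₀ᵥ = fun ω =>
      ((μ[fun ω' => Q₀ ω' * (if v ≤ A ω' then (1 : ℝ) else 0) | m0]) ω) / g₀ ω)
    (hΨ₀ : Ψ₀ = ∫ ω, Q₀ᵥ ω ∂μ)
    (hG₀pos : ∀ᵐ ω ∂μ, δ ≤ G₀ ω)
    (hg₀pos : ∀ᵐ ω ∂μ, δ ≤ g₀ ω)
    (hCI : @CondIndepGiven Ω mΩ μ m0 (MeasurableSpace.comap Δ inferInstance)
      (MeasurableSpace.comap (fun ω => (A ω, Y ω)) inferInstance))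
    (Gbar₀ : Ω → ℝ) (hGbar₀ : Gbar₀ = μ[Δ | m0])
    (hGbar₀pos : ∀ᵐ ω ∂μ, δ ≤ Gbar₀ ω) :
    Ψ₀ = ∫ ω, ((μ[fun ω' => Y ω' * Δ ω' * (if v ≤ A ω' then (1 : ℝ) else 0) | m0]) ω) /
      (Gbar₀ ω * g₀ ω) ∂μ :=
  stmt19_general (mΩ := mΩ) μ W A Δ Y hWmeas hAmeas hΔmeas hYmeas hΔ01 hY01 v δ hδ0 m0 m1 hm0 hm1 G₀
    g₀ Q₀ Q₀ᵥ Ψ₀ hG₀ hQ₀ hQ₀ᵥ hΨ₀ hCI Gbar₀ hGbar₀ hGbar₀pos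
end
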